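/- arXiv:1910.07912 — 13 statements merged into one kernel-verified Lean document; each statement's English description precedes it below -/
import Mathlib

section
/- Suppose T: M → A_exh (a collection of subsets of W) satisfies the selective CxLS* property and the proper-subset property. Then T is not exhaustively elicitable: there exists no strictly M-consistent, M-finite exhaustive scoring function for T. -/
open MeasureTheory Set
open scoped ENNReal

/-- Selective CxLS* + proper-subset property rule out exhaustive elicitability. -/
theorem stmt_1 {Ω W : Type*} [MeasurableSpace Ω]
    (M : Set (Measure Ω)) (Aexh : Set (Set W))
    (hprob : ∀ F ∈ M, IsProbabilityMeasure F)
    (T : Measure Ω → Set W)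
    (hT : ∀ F ∈ M, T F ∈ Aexh)
    (hCxLS : ∀ F0 ∈ M, ∀ F1 ∈ M, ∀ l ∈ Ioo (0 : ℝ≥0∞) 1,
      (1 - l) • F0 + l • F1 ∈ M → (T F0 ∩ T F1).Nonempty →
      T F0 ∩ T F1 = T ((1 - l) • F0 + l • F1))
    (hps : ∃ F ∈ M, ∃ G ∈ M, (T G).Nonempty ∧ T G ⊂ T F ∧
      ∀ ε ∈ Ioo (0 : ℝ≥0∞) 1, ∃ l ∈ Ioo (0 : ℝ≥0∞) ε, (1 - l) • F + l • G ∈ M) :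
    ¬ ∃ S : Set W → Ω → ℝ,
      (∀ B ∈ Aexh, ∀ F ∈ M, Integrable (S B) F) ∧
      (∀ F ∈ M, ∀ B ∈ Aexh, ∫ y, S (T F) y ∂F ≤ ∫ y, S B y ∂F) ∧
      (∀ F ∈ M, ∀ B ∈ Aexh, ∫ y, S (T F) y ∂F = ∫ y, S B y ∂F → B = T F) := by
  rintro ⟨S, hint, hcons, hstrict⟩
  obtain ⟨F, hF, G, hG, hGne, hsub, hlam⟩ := hps
  have hTF := hT F hF
  have hTG := hT G hG
  have hne : T G ≠ T F := hsub.ne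
  -- strict gap at F
  have ha : ∫ y, S (T F) y ∂F < ∫ y, S (T G) y ∂F := by
    rcases lt_or_eq_of_le (hcons F hF (T G) hTG) with h | h
    · exact h
    · exact absurd (hstrict F hF (T G) hTG h) hne
  have hb : ∫ y, S (T G) y ∂G ≤ ∫ y, S (T F) y ∂G := hcons G hG (T F) hTF
  set a : ℝ := ∫ y, S (T G) y ∂F - ∫ y, S (T F) y ∂F with ha'
  set b : ℝ := ∫ y, S (T F) y ∂G - ∫ y, S (T G) y ∂G with hb'
  have hapos : 0 < a := by simp only [ha']; linarith
  have hbnn : 0 ≤ b := by simp only [hb']; linarith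
  set δ : ℝ := min (1/2 : ℝ) (a / (2*b + 2)) with hδ'
  have hδpos : 0 < δ := lt_min (by norm_num) (div_pos hapos (by linarith))
  have hδle : δ ≤ 1/2 := min_le_left _ _
  have hδb : δ * b < a / 2 := by
    have h1 : δ * (2*b + 2) ≤ a := by
      have := min_le_right (1/2 : ℝ) (a / (2*b + 2))
      calc δ * (2*b+2) ≤ (a / (2*b+2)) * (2*b+2) := by
            apply mul_le_mul_of_nonneg_right (by rw [hδ']; exact this) (by linarith)
        _ = a := by field_simp
    nlinarith [hδpos]
  -- choose λ
  have hεmem : ENNReal.ofReal δ ∈ Ioo (0 : ℝ≥0∞) 1 := by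
    constructor
    · exact ENNReal.ofReal_pos.mpr hδpos
    · exact ENNReal.ofReal_lt_one.mpr (by linarith)
  obtain ⟨l, hl, hFl⟩ := hlam (ENNReal.ofReal δ) hεmem
  have hlne : l ≠ ⊤ := (hl.2.trans hεmem.2).trans_le le_top |>.ne
  have hl1 : l < 1 := hl.2.trans hεmem.2
  have hl1ne : (1 - l : ℝ≥0∞) ≠ ⊤ := (tsub_le_self.trans_lt (by norm_num)).ne
  set t : ℝ := l.toReal with ht'
  have htpos : 0 < t := ENNReal.toReal_pos hl.1.ne' hlne
  have htδ : t < δ := by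
    have := (ENNReal.lt_ofReal_iff_toReal_lt hlne).mp hl.2
    exact this
  have htoReal1 : (1 - l : ℝ≥0∞).toReal = 1 - t := by
    rw [ENNReal.toReal_sub_of_le hl1.le (by norm_num)]
    simp [ht']
  -- T on the mixture
  have hTmix : T ((1 - l) • F + l • G) = T G := by
    have hinter : T F ∩ T G = T G := inter_eq_self_of_subset_right hsub.subset
    have := hCxLS F hF G hG l ⟨hl.1, hl1⟩ hFl (by rw [hinter]; exact hGne)
    rw [hinter] at this
    exact this.symm
  -- expand integrals over the mixture
  have key : ∀ B ∈ Aexh, ∫ y, S B y ∂((1 - l) • F + l • G)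
      = (1 - t) * ∫ y, S B y ∂F + t * ∫ y, S B y ∂G := by
    intro B hB
    rw [integral_add_measure ((hint B hB F hF).smul_measure hl1ne)
        ((hint B hB G hG).smul_measure hlne),
      integral_smul_measure, integral_smul_measure, htoReal1]
    simp [ht', smul_eq_mul]
  -- strict inequality at the mixture
  have hmixlt : ∫ y, S (T G) y ∂((1 - l) • F + l • G)
      < ∫ y, S (T F) y ∂((1 - l) • F + l • G) := by
    have hle : ∫ y, S (T G) y ∂((1 - l) • F + l • G)
        ≤ ∫ y, S (T F) y ∂((1 - l) • F + l • G) := by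
      conv_lhs => rw [← hTmix]
      exact hcons _ hFl (T F) hTF
    rcases lt_or_eq_of_le hle with h | h
    · exact h
    · rw [← hTmix] at h
      have := hstrict _ hFl (T F) hTF h
      rw [hTmix] at this
      exact absurd this.symm hne
  rw [key (T G) hTG, key (T F) hTF] at hmixlt
  -- contradiction
  have h1t : 1 - t ≥ 1/2 := by linarith
  nlinarith [mul_le_mul_of_nonneg_left (le_of_lt htδ) hbnn]
end

section
/- A set-valued functional T: M → A_exh ⊆ 2^{A_sel} satisfying the proper-subset property cannot be both selectively elicitable and exhaustively elicitable (with M-finite scores). -/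
open MeasureTheory Set
open scoped ENNReal

/-- For two affine functions of `l` that are negative at `l = 0`, there is a uniform
threshold `ε` below which both stay negative. -/
lemma aux_eps (a b c d : ℝ) (ha : a < 0) (hc : c < 0) :
    ∃ ε : ℝ, 0 < ε ∧ ε < 1 ∧ ∀ l : ℝ, 0 < l → l < ε →
      (1 - l) * a + l * b < 0 ∧ (1 - l) * c + l * d < 0 := by
  have hpb : (0:ℝ) < |b - a| + 1 := by positivity
  have hpd : (0:ℝ) < |d - c| + 1 := by positivity
  refine ⟨min ((-a) / (|b - a| + 1)) (min ((-c) / (|d - c| + 1)) (1/2)), ?_, ?_, ?_⟩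
  · exact lt_min (div_pos (neg_pos.mpr ha) hpb)
      (lt_min (div_pos (neg_pos.mpr hc) hpd) (by norm_num))
  · calc min ((-a) / (|b - a| + 1)) (min ((-c) / (|d - c| + 1)) (1/2))
        ≤ min ((-c) / (|d - c| + 1)) (1/2) := min_le_right _ _
      _ ≤ 1/2 := min_le_right _ _
      _ < 1 := by norm_num
  · intro l hl0 hlε
    have h1 : l < (-a) / (|b - a| + 1) := lt_of_lt_of_le hlε (min_le_left _ _)
    have h2 : l < (-c) / (|d - c| + 1) :=
      lt_of_lt_of_le hlε (le_trans (min_le_right _ _) (min_le_left _ _))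
    have h1' : l * (|b - a| + 1) < -a := (lt_div_iff₀ hpb).mp h1
    have h2' : l * (|d - c| + 1) < -c := (lt_div_iff₀ hpd).mp h2
    have hb1 : l * (b - a) ≤ l * |b - a| :=
      mul_le_mul_of_nonneg_left (le_abs_self _) hl0.le
    have hd1 : l * (d - c) ≤ l * |d - c| :=
      mul_le_mul_of_nonneg_left (le_abs_self _) hl0.le
    constructor <;> nlinarith [hb1, hd1, h1', h2', hl0]

/-- Expected value with respect to a mixture measure is the corresponding
affine combination of expected values. -/
lemma integral_mix {Ω : Type*} [MeasurableSpace Ω] (F G : Measure Ω) (l : ℝ≥0∞)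
    (hl1 : l ≤ 1) (f : Ω → ℝ) (hF : Integrable f F) (hG : Integrable f G) :
    ∫ y, f y ∂((1 - l) • F + l • G)
      = (1 - l.toReal) * ∫ y, f y ∂F + l.toReal * ∫ y, f y ∂G := by
  have hlt : l ≠ ⊤ := ne_top_of_le_ne_top ENNReal.one_ne_top hl1
  have h1t : (1 - l) ≠ ⊤ := ne_top_of_le_ne_top ENNReal.one_ne_top tsub_le_self
  rw [integral_add_measure (hF.smul_measure h1t) (hG.smul_measure hlt),
      integral_smul_measure, integral_smul_measure,
      ENNReal.toReal_sub_of_le hl1 ENNReal.one_ne_top]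
  simp [smul_eq_mul]

/-- Mutual exclusivity: a set-valued functional with the proper-subset property cannot be
both selectively and exhaustively elicitable (with M-finite scores). -/
theorem stmt_2 {Ω A : Type*} [MeasurableSpace Ω]
    (M : Set (Measure Ω)) (Aexh : Set (Set A))
    (hprob : ∀ F ∈ M, IsProbabilityMeasure F)
    (T : Measure Ω → Set A) (hT : ∀ F ∈ M, T F ∈ Aexh)
    (hps : ∃ F ∈ M, ∃ G ∈ M, (T G).Nonempty ∧ T G ⊂ T F ∧
      ∀ ε ∈ Ioo (0 : ℝ≥0∞) 1, ∃ l ∈ Ioo (0 : ℝ≥0∞) ε, (1 - l) • F + l • G ∈ M) :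
    ¬ ((∃ Ssel : A → Ω → ℝ,
        (∀ x : A, ∀ F ∈ M, Integrable (Ssel x) F) ∧
        (∀ F ∈ M, ∀ t ∈ T F, ∀ x : A, ∫ y, Ssel t y ∂F ≤ ∫ y, Ssel x y ∂F) ∧
        (∀ F ∈ M, ∀ t ∈ T F, ∀ x : A,
          ∫ y, Ssel t y ∂F = ∫ y, Ssel x y ∂F → x ∈ T F)) ∧
       (∃ Sexh : Set A → Ω → ℝ,
        (∀ B ∈ Aexh, ∀ F ∈ M, Integrable (Sexh B) F) ∧
        (∀ F ∈ M, ∀ B ∈ Aexh, ∫ y, Sexh (T F) y ∂F ≤ ∫ y, Sexh B y ∂F) ∧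
        (∀ F ∈ M, ∀ B ∈ Aexh,
          ∫ y, Sexh (T F) y ∂F = ∫ y, Sexh B y ∂F → B = T F))) := by
  rintro ⟨⟨Ssel, hSint, hSle, hSeq⟩, ⟨Sexh, hEint, hEle, hEeq⟩⟩
  obtain ⟨F, hF, G, hG, ⟨t0, ht0⟩, hsub, hmix⟩ := hps
  have hTGF : T G ⊆ T F := hsub.subset
  have hTGne : T G ≠ T F := hsub.ne
  have ht0F : t0 ∈ T F := hTGF ht0
  -- first affine function: exhaustive score of T F vs T G
  set a : ℝ := (∫ y, Sexh (T F) y ∂F) - ∫ y, Sexh (T G) y ∂F with ha_def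
  set b : ℝ := (∫ y, Sexh (T F) y ∂G) - ∫ y, Sexh (T G) y ∂G with hb_def
  have ha : a < 0 := by
    have h1 : ∫ y, Sexh (T F) y ∂F ≤ ∫ y, Sexh (T G) y ∂F := hEle F hF (T G) (hT G hG)
    rcases lt_or_eq_of_le h1 with h | h
    · simpa [ha_def] using sub_neg.mpr h
    · exact absurd (hEeq F hF (T G) (hT G hG) h) hTGne
  -- second affine function: exhaustive score of T F vs ∅ (only relevant if ∅ ∈ Aexh)
  obtain ⟨c, d, hc, hcd⟩ : ∃ c d : ℝ, c < 0 ∧ ((∅ : Set A) ∈ Aexh →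
      c = (∫ y, Sexh (T F) y ∂F) - ∫ y, Sexh (∅ : Set A) y ∂F ∧
      d = (∫ y, Sexh (T F) y ∂G) - ∫ y, Sexh (∅ : Set A) y ∂G) := by
    by_cases hEmp : (∅ : Set A) ∈ Aexh
    · refine ⟨_, _, ?_, fun _ => ⟨rfl, rfl⟩⟩
      have h1 : ∫ y, Sexh (T F) y ∂F ≤ ∫ y, Sexh (∅ : Set A) y ∂F := hEle F hF ∅ hEmp
      rcases lt_or_eq_of_le h1 with h | h
      · exact sub_neg.mpr h
      · have hne : (T F).Nonempty := ⟨t0, ht0F⟩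
        refine absurd (hEeq F hF ∅ hEmp h).symm (fun hh => ?_)
        rw [hh] at hne
        exact Set.not_nonempty_empty hne
    · exact ⟨-1, 0, by norm_num, fun h => absurd h hEmp⟩
  obtain ⟨εr, hεr0, hεr1, hεr⟩ := aux_eps a b c d ha hc
  -- pick the mixture parameter
  obtain ⟨l, hlI, hM'⟩ := hmix (ENNReal.ofReal εr)
    ⟨ENNReal.ofReal_pos.mpr hεr0, by
      calc ENNReal.ofReal εr < ENNReal.ofReal 1 := by
            exact (ENNReal.ofReal_lt_ofReal_iff (by norm_num)).mpr hεr1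
        _ = 1 := ENNReal.ofReal_one⟩
  obtain ⟨hl0, hlε⟩ := hlI
  set F' : Measure Ω := (1 - l) • F + l • G with hF'def
  have hlt : l ≠ ⊤ := (lt_of_lt_of_le hlε le_top).ne
  set lr : ℝ := l.toReal with hlr_def
  have hlr0 : 0 < lr := ENNReal.toReal_pos hl0.ne' hlt
  have hlrε : lr < εr := by
    have := (ENNReal.lt_ofReal_iff_toReal_lt hlt).mp hlε
    exact this
  have hlr1 : lr < 1 := lt_trans hlrε hεr1
  have hl1 : l ≤ 1 := by
    have : ENNReal.ofReal εr ≤ 1 := ENNReal.ofReal_le_one.mpr hεr1.le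
    exact le_trans hlε.le this
  -- affine decomposition of all relevant expected scores
  have mixS : ∀ x : A, ∫ y, Ssel x y ∂F'
      = (1 - lr) * ∫ y, Ssel x y ∂F + lr * ∫ y, Ssel x y ∂G :=
    fun x => integral_mix F G l hl1 _ (hSint x F hF) (hSint x G hG)
  have mixE : ∀ B ∈ Aexh, ∫ y, Sexh B y ∂F'
      = (1 - lr) * ∫ y, Sexh B y ∂F + lr * ∫ y, Sexh B y ∂G :=
    fun B hB => integral_mix F G l hl1 _ (hEint B hB F hF) (hEint B hB G hG)
  obtain ⟨hab, hcd'⟩ := hεr lr hlr0 hlrε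
  rcases Set.eq_empty_or_nonempty (T F') with hE | ⟨t', ht'⟩
  · -- case T F' = ∅ : then ∅ ∈ Aexh and the exhaustive score gives a contradiction
    have hEmp : (∅ : Set A) ∈ Aexh := hE ▸ hT F' hM'
    obtain ⟨hc_eq, hd_eq⟩ := hcd hEmp
    have h1 : ∫ y, Sexh (T F') y ∂F' ≤ ∫ y, Sexh (T F) y ∂F' := hEle F' hM' (T F) (hT F hF)
    rw [hE, mixE ∅ hEmp, mixE (T F) (hT F hF)] at h1
    rw [hc_eq] at hcd'
    rw [hd_eq] at hcd'
    nlinarith [hcd', h1]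
  · -- case T F' nonempty : selective elicitability forces T F' = T G
    have key : ∀ u ∈ T F', u ∈ T G ∧ ∫ y, Ssel t0 y ∂F' = ∫ y, Ssel u y ∂F' := by
      intro u hu
      have hA : ∫ y, Ssel t0 y ∂F ≤ ∫ y, Ssel u y ∂F := hSle F hF t0 ht0F u
      have hB : ∫ y, Ssel t0 y ∂G ≤ ∫ y, Ssel u y ∂G := hSle G hG t0 ht0 u
      have hle1 : ∫ y, Ssel u y ∂F' ≤ ∫ y, Ssel t0 y ∂F' := hSle F' hM' u hu t0
      have hle2 : ∫ y, Ssel t0 y ∂F' ≤ ∫ y, Ssel u y ∂F' := by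
        rw [mixS t0, mixS u]
        have h1lam : (0:ℝ) ≤ 1 - lr := by linarith
        nlinarith [hA, hB]
      have heq : ∫ y, Ssel t0 y ∂F' = ∫ y, Ssel u y ∂F' := le_antisymm hle2 hle1
      have heqG : ∫ y, Ssel t0 y ∂G = ∫ y, Ssel u y ∂G := by
        have heq' := heq
        rw [mixS t0, mixS u] at heq'
        nlinarith [hA, hB, heq', hlr0, hlr1]
      exact ⟨hSeq G hG t0 ht0 u heqG, heq⟩
    have ht0F' : t0 ∈ T F' := by
      obtain ⟨-, heq⟩ := key t' ht'
      exact hSeq F' hM' t' ht' t0 heq.symm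
    have hTF'G : T F' = T G := by
      apply Set.Subset.antisymm
      · exact fun u hu => (key u hu).1
      · intro u hu
        have h1 : ∫ y, Ssel t0 y ∂G = ∫ y, Ssel u y ∂G :=
          le_antisymm (hSle G hG t0 ht0 u) (hSle G hG u hu t0)
        have h2 : ∫ y, Ssel t0 y ∂F = ∫ y, Ssel u y ∂F :=
          le_antisymm (hSle F hF t0 ht0F u) (hSle F hF u (hTGF hu) t0)
        have heq : ∫ y, Ssel t0 y ∂F' = ∫ y, Ssel u y ∂F' := by
          rw [mixS t0, mixS u, h1, h2]
        exact hSeq F' hM' t0 ht0F' u heq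
    -- exhaustive score comparison at F' contradicts the choice of ε
    have h1 : ∫ y, Sexh (T F') y ∂F' ≤ ∫ y, Sexh (T F) y ∂F' := hEle F' hM' (T F) (hT F hF)
    rw [hTF'G, mixE (T G) (hT G hG), mixE (T F) (hT F hF)] at h1
    nlinarith [hab, h1]
end

section
/- Let T': M → 2^A with T'(F) ≠ ∅ for all F, satisfying the selective CxLS* property, and suppose there exist distributions F, G, H ∈ M with T'(F) ∩ T'(G) = {t1}, T'(F) ∩ T'(H) = {t2}, t1 ≠ t2. Then any specification T: M → A of T' (i.e., T(F) ∈ T'(F) for all F) is not elicitable: there is no strictly M-consistent, M-finite scoring function for T. -/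
open MeasureTheory Set
open scoped ENNReal

lemma mix_integral_aux {Ω : Type*} [MeasurableSpace Ω] (F G : Measure Ω) (f : Ω → ℝ)
    (hF : Integrable f F) (hG : Integrable f G) {r : ℝ} (h0 : 0 ≤ r) (h1 : r ≤ 1) :
    ∫ y, f y ∂((1 - ENNReal.ofReal r) • F + ENNReal.ofReal r • G)
      = (1 - r) * ∫ y, f y ∂F + r * ∫ y, f y ∂G := by
  have hne : (1 - ENNReal.ofReal r) ≠ ∞ := by
    exact ne_top_of_le_ne_top (by simp) tsub_le_self
  rw [integral_add_measure (hF.smul_measure hne) (hG.smul_measure ENNReal.ofReal_ne_top),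
    integral_smul_measure, integral_smul_measure]
  have h2 : (1 - ENNReal.ofReal r) = ENNReal.ofReal (1 - r) := by
    rw [ENNReal.ofReal_sub _ h0, ENNReal.ofReal_one]
  rw [h2, ENNReal.toReal_ofReal (by linarith), ENNReal.toReal_ofReal h0,
    smul_eq_mul, smul_eq_mul]

/-- No specification of a selectively CxLS* functional with two distinct singleton
intersections is elicitable. -/
theorem stmt_5 {Ω A : Type*} [MeasurableSpace Ω]
    (M : Set (Measure Ω)) (hprob : ∀ F ∈ M, IsProbabilityMeasure F)
    (hmix : ∀ F0 ∈ M, ∀ F1 ∈ M, ∀ l ∈ Ioo (0 : ℝ≥0∞) 1, (1 - l) • F0 + l • F1 ∈ M)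
    (T' : Measure Ω → Set A)
    (hne : ∀ F ∈ M, (T' F).Nonempty)
    (hstar : ∀ F0 ∈ M, ∀ F1 ∈ M, ∀ l ∈ Ioo (0 : ℝ≥0∞) 1,
      (1 - l) • F0 + l • F1 ∈ M → (T' F0 ∩ T' F1).Nonempty →
      T' F0 ∩ T' F1 = T' ((1 - l) • F0 + l • F1))
    (t1 t2 : A) (ht : t1 ≠ t2)
    (hFGH : ∃ F ∈ M, ∃ G ∈ M, ∃ H ∈ M,
      T' F ∩ T' G = {t1} ∧ T' F ∩ T' H = {t2})
    (T : Measure Ω → A) (hsel : ∀ F ∈ M, T F ∈ T' F) :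
    ¬ ∃ S : A → Ω → ℝ,
      (∀ x : A, ∀ F ∈ M, Integrable (S x) F) ∧
      (∀ F ∈ M, ∀ x : A, ∫ y, S (T F) y ∂F ≤ ∫ y, S x y ∂F) ∧
      (∀ F ∈ M, ∀ x : A, ∫ y, S (T F) y ∂F = ∫ y, S x y ∂F → x = T F) := by
  rintro ⟨S, hint, hcons, hstrict⟩
  obtain ⟨F, hF, G, hG, H, hH, hTG, hTH⟩ := hFGH
  -- key claim: if T' F ∩ T' G' = {t}, then t = T F
  have key : ∀ G' ∈ M, ∀ t : A, T' F ∩ T' G' = {t} → t = T F := by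
    intro G' hG' t hTt
    have htmem : t ∈ T' F ∩ T' G' := by rw [hTt]; rfl
    -- for each r ∈ (0,1), the mixture has value t
    have hmixval : ∀ r : ℝ, 0 < r → r < 1 →
        (1 - r) * ∫ y, S t y ∂F + r * ∫ y, S t y ∂G'
          ≤ (1 - r) * ∫ y, S (T F) y ∂F + r * ∫ y, S (T F) y ∂G' := by
      intro r h0 h1
      set l : ℝ≥0∞ := ENNReal.ofReal r with hl
      have hlmem : l ∈ Ioo (0 : ℝ≥0∞) 1 := by
        constructor
        · simpa [hl] using h0
        · rw [hl, ← ENNReal.ofReal_one]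
          exact (ENNReal.ofReal_lt_ofReal_iff one_pos).2 h1
      have hμ : (1 - l) • F + l • G' ∈ M := hmix F hF G' hG' l hlmem
      have hT'μ : T' ((1 - l) • F + l • G') = {t} := by
        rw [← hstar F hF G' hG' l hlmem hμ ⟨t, htmem⟩, hTt]
      have hTμ : T ((1 - l) • F + l • G') = t := by
        have := hsel _ hμ
        rw [hT'μ] at this
        exact this
      have := hcons _ hμ (T F)
      rw [hTμ] at this
      rwa [mix_integral_aux F G' (S t) (hint t F hF) (hint t G' hG') h0.le h1.le,
        mix_integral_aux F G' (S (T F)) (hint (T F) F hF) (hint (T F) G' hG') h0.le h1.le]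
        at this
    -- deduce ∫ S t ∂F ≤ ∫ S (T F) ∂F
    have hle : ∫ y, S t y ∂F ≤ ∫ y, S (T F) y ∂F := by
      by_contra hlt
      push_neg at hlt
      set a := ∫ y, S (T F) y ∂F
      set a' := ∫ y, S t y ∂F
      set b := ∫ y, S (T F) y ∂G'
      set b' := ∫ y, S t y ∂G'
      have d0 : 0 < a' - a := by linarith
      have hhalf := hmixval (1/2) (by norm_num) (by norm_num)
      have he : a' - a ≤ b - b' := by linarith
      have he0 : 0 < b - b' := lt_of_lt_of_le d0 he
      have hr0 : 0 < (a' - a) / (3 * (b - b')) := by positivity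
      have hr1 : (a' - a) / (3 * (b - b')) < 1 := by
        rw [div_lt_one (by linarith)]
        linarith
      have := hmixval _ hr0 hr1
      have hkey : (1 - (a' - a) / (3 * (b - b'))) * (a' - a)
          ≤ ((a' - a) / (3 * (b - b'))) * (b - b') := by linarith
      have hc : (a' - a) / (3 * (b - b')) * (b - b') = (a' - a) / 3 := by
        field_simp
      rw [hc] at hkey
      nlinarith
    have heq : ∫ y, S (T F) y ∂F = ∫ y, S t y ∂F :=
      le_antisymm (hcons F hF t) hle
    exact hstrict F hF t heq
  have h1 := key G hG t1 hTG
  have h2 := key H hH t2 hTH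
  exact ht (h1.trans h2.symm)
end

section
/- Under the hypotheses of the previous statement, if additionally A carries a T1 topology (for any a ≠ b there is an open set containing a but not b), then any specification T of T' fails to be mixture-continuous: there exist F, G ∈ M such that λ ↦ T((1−λ)F + λG) is not continuous on [0,1]. -/
open MeasureTheory Set
open scoped ENNReal

/-- Under the CxLS* hypotheses with two distinct singleton intersections and a T1
topology on the action domain, every specification fails to be mixture-continuous. -/
theorem stmt_6 {Ω A : Type*} [MeasurableSpace Ω] [TopologicalSpace A]
    (hT1 : ∀ a b : A, a ≠ b → ∃ U : Set A, IsOpen U ∧ a ∈ U ∧ b ∉ U)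
    (M : Set (Measure Ω)) (hprob : ∀ F ∈ M, IsProbabilityMeasure F)
    (hmix : ∀ F0 ∈ M, ∀ F1 ∈ M, ∀ l ∈ Ioo (0 : ℝ≥0∞) 1, (1 - l) • F0 + l • F1 ∈ M)
    (T' : Measure Ω → Set A)
    (hne : ∀ F ∈ M, (T' F).Nonempty)
    (hstar : ∀ F0 ∈ M, ∀ F1 ∈ M, ∀ l ∈ Ioo (0 : ℝ≥0∞) 1,
      (1 - l) • F0 + l • F1 ∈ M → (T' F0 ∩ T' F1).Nonempty →
      T' F0 ∩ T' F1 = T' ((1 - l) • F0 + l • F1))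
    (t1 t2 : A) (ht : t1 ≠ t2)
    (hFGH : ∃ F ∈ M, ∃ G ∈ M, ∃ H ∈ M,
      T' F ∩ T' G = {t1} ∧ T' F ∩ T' H = {t2})
    (T : Measure Ω → A) (hsel : ∀ F ∈ M, T F ∈ T' F) :
    ∃ F ∈ M, ∃ G ∈ M,
      ¬ ContinuousOn (fun l : ℝ≥0∞ => T ((1 - l) • F + l • G)) (Icc (0 : ℝ≥0∞) 1) := by
  obtain ⟨F, hF, G, hG, H, hH, hFG, hFH⟩ := hFGH
  have key : ∀ G' ∈ M, ∀ t : A, T' F ∩ T' G' = {t} → T F ≠ t →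
      ¬ ContinuousOn (fun l : ℝ≥0∞ => T ((1 - l) • F + l • G')) (Icc (0 : ℝ≥0∞) 1) := by
    intro G' hG' t hInt hTF hc
    -- value on interior mixtures is t
    have hval : ∀ l ∈ Ioo (0 : ℝ≥0∞) 1, T ((1 - l) • F + l • G') = t := by
      intro l hl
      have hmem := hmix F hF G' hG' l hl
      have h := hstar F hF G' hG' l hl hmem (hInt ▸ ⟨t, rfl⟩)
      have := hsel _ hmem
      rw [← h, hInt] at this
      exact this
    have h0 : (fun l : ℝ≥0∞ => T ((1 - l) • F + l • G')) 0 = T F := by simp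
    have hcw : ContinuousWithinAt (fun l : ℝ≥0∞ => T ((1 - l) • F + l • G'))
        (Icc (0 : ℝ≥0∞) 1) 0 := hc 0 ⟨le_refl _, zero_le_one⟩
    obtain ⟨U, hUopen, hTFU, htU⟩ := hT1 (T F) t hTF
    have hmemU : (fun l : ℝ≥0∞ => T ((1 - l) • F + l • G')) ⁻¹' U ∈
        nhdsWithin (0 : ℝ≥0∞) (Icc 0 1) := by
      apply hcw
      rw [h0]
      exact hUopen.mem_nhds hTFU
    have hle : nhdsWithin (0 : ℝ≥0∞) (Ioo 0 1) ≤ nhdsWithin 0 (Icc 0 1) :=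
      nhdsWithin_mono _ Ioo_subset_Icc_self
    have hclos : (0 : ℝ≥0∞) ∈ closure (Ioo (0 : ℝ≥0∞) 1) := by
      rw [closure_Ioo (by norm_num : (0 : ℝ≥0∞) ≠ 1)]
      exact ⟨le_refl _, zero_le_one⟩
    have hnb : (nhdsWithin (0 : ℝ≥0∞) (Ioo 0 1)).NeBot :=
      mem_closure_iff_nhdsWithin_neBot.mp hclos
    have hmemU' := hle hmemU
    obtain ⟨l, hlU, hlIoo⟩ := (hnb.nonempty_of_mem
      (Filter.inter_mem hmemU' self_mem_nhdsWithin))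
    rw [mem_preimage, hval l hlIoo] at hlU
    exact htU hlU
  by_cases hTF : T F = t1
  · exact ⟨F, hF, H, hH, key H hH t2 hFH (hTF ▸ ht)⟩
  · exact ⟨F, hF, G, hG, key G hG t1 hFG hTF⟩
end

section
/- For a Borel probability distribution F on R and α ∈ (0,1], the function Γ_α(F)(a) = inf{b ≥ a : F([a,b]) ≥ α}, defined for a with F((−∞,a)) ≤ 1−α, satisfies F([a, Γ_α(F)(a)]) ≥ α; moreover Γ_α(F) is increasing and left-continuous. -/
open MeasureTheory Set
open scoped ENNReal

private lemma meas_liminf {F : Measure ℝ} [IsProbabilityMeasure F] {α : ℝ}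
    (s : ℕ → Set ℝ) (hm : ∀ n, MeasurableSet (s n)) (hmono : Antitone s)
    (hge : ∀ n, α ≤ (F (s n)).toReal) : α ≤ (F (⋂ n, s n)).toReal := by
  have h := tendsto_measure_iInter_atTop (μ := F) (fun n => (hm n).nullMeasurableSet)
    hmono ⟨0, measure_ne_top F _⟩
  have h2 : Filter.Tendsto (fun n => (F (s n)).toReal) Filter.atTop
      (nhds (F (⋂ n, s n)).toReal) :=
    (ENNReal.tendsto_toReal (measure_ne_top F _)).comp h
  exact ge_of_tendsto h2 (Filter.Eventually.of_forall hge)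

/-- Basic properties of Γ_α(F): coverage, monotonicity, left-continuity. -/
theorem stmt_7 (F : Measure ℝ) [IsProbabilityMeasure F]
    (α : ℝ) (hα : α ∈ Ioc (0 : ℝ) 1)
    (Γ : ℝ → EReal)
    (hΓ : ∀ a : ℝ, Γ a = sInf {b : EReal | (a : EReal) ≤ b ∧
      α ≤ (F {y : ℝ | a ≤ y ∧ (y : EReal) ≤ b}).toReal}) :
    (∀ a : ℝ, (F (Iio a)).toReal ≤ 1 - α →
      α ≤ (F {y : ℝ | a ≤ y ∧ (y : EReal) ≤ Γ a}).toReal) ∧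
    (∀ a a' : ℝ, (F (Iio a)).toReal ≤ 1 - α → (F (Iio a')).toReal ≤ 1 - α →
      a ≤ a' → Γ a ≤ Γ a') ∧
    (∀ a : ℝ, (F (Iio a)).toReal ≤ 1 - α →
      ContinuousWithinAt Γ (Iio a) a) := by
  set S : ℝ → Set EReal := fun a => {b : EReal | (a : EReal) ≤ b ∧
      α ≤ (F {y : ℝ | a ≤ y ∧ (y : EReal) ≤ b}).toReal} with hS
  -- monotonicity of Γ, unconditionally
  have hsub : ∀ a a' : ℝ, a ≤ a' → S a' ⊆ S a := by
    intro a a' haa' b hb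
    refine ⟨le_trans (by exact_mod_cast haa') hb.1, le_trans hb.2 ?_⟩
    have hsubset : {y : ℝ | a' ≤ y ∧ (y : EReal) ≤ b} ⊆ {y : ℝ | a ≤ y ∧ (y : EReal) ≤ b} :=
      fun y hy => ⟨le_trans haa' hy.1, hy.2⟩
    have := measure_mono (μ := F) hsubset
    exact ENNReal.toReal_mono (measure_ne_top F _) this
  have hmonoΓ : Monotone Γ := by
    intro a a' haa'
    rw [hΓ, hΓ]
    exact sInf_le_sInf (hsub a a' haa')
  -- Γ a ≥ a
  have hge : ∀ a : ℝ, (a : EReal) ≤ Γ a := by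
    intro a
    rw [hΓ]
    exact le_sInf fun b hb => hb.1
  -- ⊤ ∈ S a when F(Iio a) ≤ 1 - α
  have htop : ∀ a : ℝ, (F (Iio a)).toReal ≤ 1 - α → (⊤ : EReal) ∈ S a := by
    intro a ha
    refine ⟨le_top, ?_⟩
    have hset : {y : ℝ | a ≤ y ∧ (y : EReal) ≤ (⊤ : EReal)} = Ici a := by
      ext y; simp [le_top]
    rw [hset]
    have hcompl : F (Ici a) = 1 - F (Iio a) := by
      rw [← compl_Iio]
      exact prob_compl_eq_one_sub measurableSet_Iio
    rw [hcompl, ENNReal.toReal_sub_of_le prob_le_one (by simp)]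
    simp only [ENNReal.toReal_one]
    linarith
  have hSne : ∀ a : ℝ, (F (Iio a)).toReal ≤ 1 - α → (S a).Nonempty :=
    fun a ha => ⟨⊤, htop a ha⟩
  -- coverage
  have hcov : ∀ a : ℝ, (F (Iio a)).toReal ≤ 1 - α →
      α ≤ (F {y : ℝ | a ≤ y ∧ (y : EReal) ≤ Γ a}).toReal := by
    intro a ha
    rcases eq_or_ne (Γ a) ⊤ with hT | hT
    · rw [hT]
      exact (htop a ha).2
    · have hB : Γ a ≠ ⊥ := by
        intro h
        exact absurd (h ▸ hge a) (by simp)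
      lift Γ a to ℝ using ⟨hT, hB⟩ with g hg
      have hag : a ≤ g := by
        have h := hge a; rw [← hg] at h; exact_mod_cast h
      -- for each n, some b ∈ S a with b < g + 1/(n+1)
      have hn : ∀ n : ℕ, α ≤ (F (Icc a (g + 1 / (n + 1)))).toReal := by
        intro n
        have hpos : (0 : ℝ) < 1 / (n + 1) := by positivity
        have hlt : sInf (S a) < ((g + 1 / (n + 1) : ℝ) : EReal) := by
          rw [← hΓ, ← hg]
          exact_mod_cast (by linarith : g < g + 1 / (n + 1))
        obtain ⟨b, hbS, hblt⟩ := sInf_lt_iff.mp hlt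
        refine le_trans hbS.2 (ENNReal.toReal_mono (measure_ne_top F _) (measure_mono ?_))
        intro y hy
        refine ⟨hy.1, ?_⟩
        exact_mod_cast le_of_lt (lt_of_le_of_lt hy.2 hblt)
      have hiInter : (⋂ n : ℕ, Icc a (g + 1 / (n + 1))) = Icc a g := by
        ext y
        simp only [mem_iInter, mem_Icc]
        constructor
        · intro h
          refine ⟨(h 0).1, ?_⟩
          by_contra hgy
          push_neg at hgy
          obtain ⟨n, hn'⟩ := exists_nat_one_div_lt (by linarith : (0:ℝ) < y - g)
          have := (h n).2
          linarith
        · intro h n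
          have hpos : (0 : ℝ) < 1 / (n + 1) := by positivity
          exact ⟨h.1, by linarith⟩
      have : α ≤ (F (Icc a g)).toReal := by
        rw [← hiInter]
        refine meas_liminf _ (fun n => measurableSet_Icc) ?_ hn
        intro m n hmn
        apply Icc_subset_Icc le_rfl
        have : (1 : ℝ) / (n + 1) ≤ 1 / (m + 1) := by
          apply one_div_le_one_div_of_le (by positivity)
          exact_mod_cast by omega
        linarith
      refine le_trans this (le_of_eq (congrArg _ (congrArg _ ?_)))
      ext y
      simp only [mem_Icc, mem_setOf_eq, ← hg, EReal.coe_le_coe_iff]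
  refine ⟨hcov, fun a a' _ _ h => hmonoΓ h, ?_⟩
  -- left continuity
  intro a ha
  have hL : Γ a = sSup (Γ '' Iio a) := by
    refine le_antisymm ?_ (sSup_le ?_)
    swap
    · rintro b ⟨x, hx, rfl⟩
      exact hmonoΓ (le_of_lt hx)
    have haL : (a : EReal) ≤ sSup (Γ '' Iio a) := by
      refine le_of_forall_lt_imp_le_of_dense ?_
      intro c hc
      induction c with
      | bot => exact bot_le
      | coe x =>
        have hxa : x < a := by exact_mod_cast hc
        exact le_trans (hge x) (le_sSup ⟨x, hxa, rfl⟩)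
      | top => exact absurd hc (by simp)
    rcases eq_or_ne (sSup (Γ '' Iio a)) ⊤ with hT | hT
    · rw [hT]; exact le_top
    · have hB : sSup (Γ '' Iio a) ≠ ⊥ := fun h => absurd (h ▸ haL) (by simp)
      lift sSup (Γ '' Iio a) to ℝ using ⟨hT, hB⟩ with l hl
      have hal : a ≤ l := by exact_mod_cast haL
      rw [hΓ]
      apply sInf_le
      refine ⟨haL, ?_⟩
      have hn : ∀ n : ℕ, α ≤ (F (Icc (a - 1 / (n + 1)) l)).toReal := by
        intro n
        have hpos : (0 : ℝ) < 1 / (n + 1) := by positivity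
        set x := a - 1 / (n + 1) with hx
        have hxa : x < a := by rw [hx]; linarith
        have hax : (F (Iio x)).toReal ≤ 1 - α :=
          le_trans (ENNReal.toReal_mono (measure_ne_top F _)
            (measure_mono (Iio_subset_Iio (le_of_lt hxa)))) ha
        refine le_trans (hcov x hax) (ENNReal.toReal_mono (measure_ne_top F _)
          (measure_mono ?_))
        intro y hy
        refine ⟨hy.1, ?_⟩
        have : Γ x ≤ ((l : ℝ) : EReal) := by
          rw [hl]
          exact le_sSup ⟨x, hxa, rfl⟩
        exact_mod_cast le_trans hy.2 this
      have hiInter : (⋂ n : ℕ, Icc (a - 1 / (n + 1)) l) = Icc a l := by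
        ext y
        simp only [mem_iInter, mem_Icc]
        constructor
        · intro h
          refine ⟨?_, (h 0).2⟩
          by_contra hya
          push_neg at hya
          obtain ⟨n, hn'⟩ := exists_nat_one_div_lt (by linarith : (0:ℝ) < a - y)
          have := (h n).1
          linarith
        · intro h n
          have hpos : (0 : ℝ) < 1 / (n + 1) := by positivity
          exact ⟨by linarith [h.1], h.2⟩
      have hαl : α ≤ (F (Icc a l)).toReal := by
        rw [← hiInter]
        refine meas_liminf _ (fun n => measurableSet_Icc) ?_ hn
        intro m n hmn
        apply Icc_subset_Icc _ le_rfl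
        have : (1 : ℝ) / (n + 1) ≤ 1 / (m + 1) := by
          apply one_div_le_one_div_of_le (by positivity)
          exact_mod_cast by omega
        linarith
      refine le_trans hαl (le_of_eq (congrArg _ (congrArg _ ?_)))
      ext y
      simp only [mem_Icc, mem_setOf_eq, EReal.coe_le_coe_iff]
  have := hmonoΓ.tendsto_nhdsLT a
  rw [← hL] at this
  exact this
end

section
/- For α ∈ (0,1], the functional F ↦ graph Γ_α(F) is selectively identifiable on the class of continuous strictly increasing distributions: V((x1,x2), y) = 1{y ∈ [x1,x2]} − α is a strict selective identification function, i.e., E_F[V((x1,x2),Y)] = 0 iff F(x2) − F(x1) = α and x2 = Γ_α(F)(x1); moreover for any Borel distribution F, E_F[V(x,Y)] ≥ 0 iff x belongs to the set I_α(F) of α-prediction intervals. -/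
open MeasureTheory Set

lemma integral_V_aux (G : Measure ℝ) [IsProbabilityMeasure G] (x1 x2 α : ℝ) :
    (∫ y, ((if y ∈ Icc x1 x2 then (1 : ℝ) else 0) - α) ∂G)
      = (G (Icc x1 x2)).toReal - α := by
  have h1 : Integrable ((Icc x1 x2).indicator (fun _ => (1 : ℝ))) G :=
    (integrable_const 1).indicator measurableSet_Icc
  have heq : (fun y => (if y ∈ Icc x1 x2 then (1 : ℝ) else 0) - α)
      = fun y => (Icc x1 x2).indicator (fun _ => (1 : ℝ)) y - α := by
    funext y; simp [Set.indicator]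
  rw [heq, integral_sub h1 (integrable_const α), integral_indicator_const _ measurableSet_Icc,
    integral_const]
  simp
  rfl

lemma atomless_of_cts (F : Measure ℝ) [IsProbabilityMeasure F]
    (cdf : ℝ → ℝ) (hcdf : ∀ t : ℝ, cdf t = (F (Iic t)).toReal)
    (hc : Continuous cdf) (t : ℝ) : F {t} = 0 := by
  have hfin : ∀ s : Set ℝ, F s ≠ ⊤ := fun s => measure_ne_top F s
  have key : ∀ s : ℝ, s < t → (F {t}).toReal ≤ cdf t - cdf s := by
    intro s hst
    have hsub : (Iic s : Set ℝ) ⊆ Iic t := Iic_subset_Iic.mpr hst.le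
    have hdiff : F (Ioc s t) = F (Iic t) - F (Iic s) := by
      rw [← Iic_sdiff_Iic]
      exact measure_diff hsub measurableSet_Iic.nullMeasurableSet (hfin _)
    have h1 : F {t} ≤ F (Ioc s t) := measure_mono (by simp [hst])
    have h2 : (F (Ioc s t)).toReal = cdf t - cdf s := by
      rw [hdiff, ENNReal.toReal_sub_of_le (measure_mono hsub) (hfin _), hcdf, hcdf]
    calc (F {t}).toReal ≤ (F (Ioc s t)).toReal :=
          ENNReal.toReal_mono (hfin _) h1
      _ = cdf t - cdf s := h2
  have htend : Filter.Tendsto (fun s => cdf t - cdf s) (nhdsWithin t (Iio t))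
      (nhds (cdf t - cdf t)) :=
    (((hc.tendsto t).const_sub _).mono_left nhdsWithin_le_nhds)
  have hle : (F {t}).toReal ≤ cdf t - cdf t := by
    refine ge_of_tendsto htend ?_
    filter_upwards [self_mem_nhdsWithin] with s hs
    exact key s hs
  have : (F {t}).toReal = 0 := le_antisymm (by simpa using hle) ENNReal.toReal_nonneg
  exact (ENNReal.toReal_eq_zero_iff _).mp this |>.resolve_right (hfin _)

lemma measure_Icc_eq (F : Measure ℝ) [IsProbabilityMeasure F]
    (cdf : ℝ → ℝ) (hcdf : ∀ t : ℝ, cdf t = (F (Iic t)).toReal)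
    (hc : Continuous cdf) (x1 x2 : ℝ) (h : x1 ≤ x2) :
    (F (Icc x1 x2)).toReal = cdf x2 - cdf x1 := by
  have hatom := atomless_of_cts F cdf hcdf hc x1
  have hio : F (Iio x1) = F (Iic x1) := by
    rw [show (Iio x1 : Set ℝ) = Iic x1 \ {x1} by
      ext y; simp [lt_iff_le_and_ne]]
    exact measure_diff_null hatom
  have hsub : (Iio x1 : Set ℝ) ⊆ Iic x2 := fun y hy => le_trans (le_of_lt hy) h
  have : F (Icc x1 x2) = F (Iic x2) - F (Iio x1) := by
    rw [show (Icc x1 x2 : Set ℝ) = Iic x2 \ Iio x1 by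
      ext y; simp [Icc, and_comm, not_lt]]
    exact measure_diff hsub measurableSet_Iio.nullMeasurableSet (measure_ne_top F _)
  rw [this, ENNReal.toReal_sub_of_le (measure_mono hsub) (measure_ne_top F _), hio,
    hcdf, hcdf]

/-- Selective identifiability of graph Γ_α and orientation of the identification
function V((x1,x2),y) = 1{y ∈ [x1,x2]} − α. -/
theorem stmt_9 (α : ℝ) (hα : α ∈ Ioc (0 : ℝ) 1)
    (F : Measure ℝ) [IsProbabilityMeasure F]
    (cdf : ℝ → ℝ) (hcdf : ∀ t : ℝ, cdf t = (F (Iic t)).toReal)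
    (hc : Continuous cdf) (hm : StrictMono cdf)
    (Γ : ℝ → ℝ) (hΓ : ∀ a : ℝ, Γ a = sInf {b : ℝ | a ≤ b ∧ α ≤ cdf b - cdf a}) :
    (∀ x1 x2 : ℝ, x1 ≤ x2 →
      ((∫ y, ((if y ∈ Icc x1 x2 then (1 : ℝ) else 0) - α) ∂F) = 0 ↔
        (cdf x2 - cdf x1 = α ∧ x2 = Γ x1))) ∧
    (∀ G : Measure ℝ, IsProbabilityMeasure G → ∀ x1 x2 : ℝ, x1 ≤ x2 →
      (0 ≤ ∫ y, ((if y ∈ Icc x1 x2 then (1 : ℝ) else 0) - α) ∂G ↔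
        α ≤ (G (Icc x1 x2)).toReal)) := by
  constructor
  · intro x1 x2 h12
    rw [integral_V_aux, measure_Icc_eq F cdf hcdf hc x1 x2 h12]
    constructor
    · intro h
      have heq : cdf x2 - cdf x1 = α := by linarith
      refine ⟨heq, ?_⟩
      rw [hΓ]
      have hmem : x2 ∈ {b : ℝ | x1 ≤ b ∧ α ≤ cdf b - cdf x1} := ⟨h12, heq.ge⟩
      have hlb : ∀ b ∈ {b : ℝ | x1 ≤ b ∧ α ≤ cdf b - cdf x1}, x2 ≤ b := by
        intro b hb
        have : cdf x2 ≤ cdf b := by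
          have := hb.2; linarith
        exact hm.le_iff_le.mp this
      exact le_antisymm (le_csInf ⟨x2, hmem⟩ hlb) (csInf_le ⟨x2, hlb⟩ hmem)
    · intro ⟨h, _⟩; linarith
  · intro G hG x1 x2 h12
    rw [integral_V_aux]
    constructor <;> intro h <;> linarith
end

section
/- Let μ be a finite nonnegative σ-additive measure on U = {(a,b) ∈ R² : a ≤ b}. The function S_exh(A, y) = α·μ(A ∩ U) − μ(((−∞,y] × [y,∞)) ∩ A ∩ U), defined on upper sets A (with respect to the cone (−∞,0] × [0,∞)) of extended pairs, is an M_0-consistent exhaustive scoring function for the class of α-prediction intervals I_α: for every Borel probability measure F on R, E_F[S_exh(I_α(F), Y)] ≤ E_F[S_exh(A, Y)] for all A in the action domain. -/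
open MeasureTheory Set

lemma meas_F_Icc (F : Measure ℝ) [IsFiniteMeasure F] :
    Measurable fun p : ℝ × ℝ => F (Icc p.1 p.2) := by
  have hs : MeasurableSet {q : (ℝ × ℝ) × ℝ | q.1.1 ≤ q.2 ∧ q.2 ≤ q.1.2} :=
    (measurableSet_le (measurable_fst.comp measurable_fst) measurable_snd).inter
      (measurableSet_le measurable_snd (measurable_snd.comp measurable_fst))
  have h := measurable_measure_prodMk_left (ν := F) hs
  convert h using 2 with p
  rfl

lemma fubini_key (μ : Measure (ℝ×ℝ)) [IsFiniteMeasure μ] (F : Measure ℝ) [IsFiniteMeasure F]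
    (A : Set (ℝ×ℝ)) (hA : MeasurableSet A) :
    ∫⁻ y, μ (A ∩ {p : ℝ×ℝ | p.1 ≤ y ∧ y ≤ p.2}) ∂F = ∫⁻ p in A, F (Icc p.1 p.2) ∂μ := by
  set W : Set (ℝ × (ℝ×ℝ)) := {q | q.2 ∈ A ∧ q.2.1 ≤ q.1 ∧ q.1 ≤ q.2.2} with hWdef
  have hW : MeasurableSet W := by
    refine (measurable_snd hA).inter ?_
    exact ((measurableSet_le (measurable_fst.comp measurable_snd) measurable_fst).inter
      (measurableSet_le measurable_fst (measurable_snd.comp measurable_snd)))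
  have h1 : (F.prod μ) W = ∫⁻ y, μ (A ∩ {p : ℝ×ℝ | p.1 ≤ y ∧ y ≤ p.2}) ∂F := by
    rw [Measure.prod_apply hW]
    refine lintegral_congr fun y => ?_
    congr 1
  have h2 : (F.prod μ) W = ∫⁻ p in A, F (Icc p.1 p.2) ∂μ := by
    rw [← Measure.prod_swap, Measure.map_apply measurable_swap hW,
      Measure.prod_apply (measurable_swap hW)]
    rw [← lintegral_indicator (f := fun p : ℝ×ℝ => F (Icc p.1 p.2)) hA]
    refine lintegral_congr fun p => ?_
    by_cases hp : p ∈ A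
    · rw [indicator_of_mem hp]
      congr 1
      ext y; simp [W, hp, Icc]
    · rw [indicator_of_notMem hp,
        show (Prod.mk p ⁻¹' (Prod.swap ⁻¹' W)) = ∅ by ext y; simp [W, hp], measure_empty]
  rw [← h1, h2]

-- measurability of y ↦ μ (A ∩ B_y)
lemma meas_slice (μ : Measure (ℝ×ℝ)) [IsFiniteMeasure μ]
    (A : Set (ℝ×ℝ)) (hA : MeasurableSet A) :
    Measurable fun y : ℝ => μ (A ∩ {p : ℝ×ℝ | p.1 ≤ y ∧ y ≤ p.2}) := by
  have hs : MeasurableSet {q : ℝ × (ℝ×ℝ) | q.2 ∈ A ∧ q.2.1 ≤ q.1 ∧ q.1 ≤ q.2.2} := by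
    refine (measurable_snd hA).inter ?_
    exact ((measurableSet_le (measurable_fst.comp measurable_snd) measurable_fst).inter
      (measurableSet_le measurable_fst (measurable_snd.comp measurable_snd)))
  have h := measurable_measure_prodMk_left (ν := μ) hs
  convert h using 2 with y
  rfl

-- core identity
lemma core_id (α : ℝ) (μ : Measure (ℝ×ℝ)) [IsFiniteMeasure μ]
    (F : Measure ℝ) [IsProbabilityMeasure F]
    (B : Set (ℝ×ℝ)) (hB : MeasurableSet B) :
    ∫ y, (α * (μ B).toReal - (μ (B ∩ {p : ℝ×ℝ | p.1 ≤ y ∧ y ≤ p.2})).toReal) ∂F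
      = ∫ p in B, (α - (F (Icc p.1 p.2)).toReal) ∂μ := by
  have hgm : Measurable fun p : ℝ×ℝ => (F (Icc p.1 p.2)).toReal :=
    (meas_F_Icc F).ennreal_toReal
  have hgint : Integrable (fun p : ℝ×ℝ => (F (Icc p.1 p.2)).toReal) (μ.restrict B) := by
    refine (integrable_const (1:ℝ)).mono' hgm.aestronglyMeasurable ?_
    refine Filter.Eventually.of_forall fun p => ?_
    rw [Real.norm_eq_abs, abs_of_nonneg ENNReal.toReal_nonneg]
    exact ENNReal.toReal_le_of_le_ofReal one_pos.le (by simpa using prob_le_one (μ := F))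
  have hslice : Integrable (fun y => (μ (B ∩ {p : ℝ×ℝ | p.1 ≤ y ∧ y ≤ p.2})).toReal) F := by
    refine (integrable_const ((μ univ).toReal)).mono'
      ((meas_slice μ B hB).ennreal_toReal).aestronglyMeasurable ?_
    refine Filter.Eventually.of_forall fun y => ?_
    rw [Real.norm_eq_abs, abs_of_nonneg ENNReal.toReal_nonneg]
    exact ENNReal.toReal_mono (measure_ne_top μ _) (measure_mono (subset_univ _))
  rw [integral_sub (integrable_const _) hslice, integral_const]
  have h1 : ∫ y, (μ (B ∩ {p : ℝ×ℝ | p.1 ≤ y ∧ y ≤ p.2})).toReal ∂F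
      = ∫ p in B, (F (Icc p.1 p.2)).toReal ∂μ := by
    rw [integral_toReal ((meas_slice μ B hB)).aemeasurable
      (Filter.Eventually.of_forall fun y => (measure_lt_top μ _).trans_le le_rfl),
      fubini_key μ F B hB,
      integral_toReal ((meas_F_Icc F).aemeasurable.restrict)
      (Filter.Eventually.of_forall fun p => (measure_lt_top F _).trans_le le_rfl)]
  rw [h1, integral_sub (integrable_const _) hgint, setIntegral_const]
  simp [measure_univ, Measure.restrict_apply_univ]
  ring_nf
  rfl

/-- The integrated score S_exh(A,y) = α μ(A∩U) − μ(((−∞,y]×[y,∞)) ∩ A ∩ U) is a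
consistent exhaustive scoring function for the class of α-prediction intervals. -/
theorem stmt_10 (α : ℝ) (hα : α ∈ Ioc (0 : ℝ) 1)
    (μ : Measure (ℝ × ℝ)) [IsFiniteMeasure μ]
    (Iα : Measure ℝ → Set (EReal × EReal))
    (hIα : ∀ F : Measure ℝ, Iα F = {q : EReal × EReal | q.1 ≤ q.2 ∧
      α ≤ (F {y : ℝ | q.1 ≤ (y : EReal) ∧ (y : EReal) ≤ q.2}).toReal})
    (S : Set (EReal × EReal) → ℝ → ℝ)
    (hS : ∀ (A : Set (EReal × EReal)) (y : ℝ), S A y =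
      α * (μ {p : ℝ × ℝ | p.1 ≤ p.2 ∧ ((p.1 : EReal), (p.2 : EReal)) ∈ A}).toReal
      - (μ {p : ℝ × ℝ | p.1 ≤ p.2 ∧ ((p.1 : EReal), (p.2 : EReal)) ∈ A ∧
          p.1 ≤ y ∧ y ≤ p.2}).toReal) :
    ∀ F : Measure ℝ, IsProbabilityMeasure F →
    ∀ A : Set (EReal × EReal), A.Nonempty →
      (∀ p ∈ A, ∀ q : EReal × EReal, q.1 ≤ p.1 → p.2 ≤ q.2 → q ∈ A) →
      ∫ y, S (Iα F) y ∂F ≤ ∫ y, S A y ∂F := by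
  intro F hF A hAne hup
  set g : ℝ × ℝ → ℝ := fun p => (F (Icc p.1 p.2)).toReal with hg
  set w : ℝ × ℝ → ℝ := fun p => α - g p with hw
  have hgm : Measurable g := (meas_F_Icc F).ennreal_toReal
  have hg01 : ∀ p, 0 ≤ g p ∧ g p ≤ 1 := by
    intro p
    refine ⟨ENNReal.toReal_nonneg, ?_⟩
    have : (F (Icc p.1 p.2)).toReal ≤ (F univ).toReal :=
      ENNReal.toReal_mono (measure_ne_top F _) (measure_mono (subset_univ _))
    simpa [measure_univ] using this
  have hwint : Integrable w μ := by
    refine (integrable_const (α + 1)).mono'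
      ((measurable_const.sub hgm).aestronglyMeasurable) ?_
    refine Filter.Eventually.of_forall fun p => ?_
    rw [Real.norm_eq_abs]
    have := hg01 p
    rw [abs_le]
    obtain ⟨h0, h1⟩ := hg01 p
    simp only [hw]
    constructor <;> nlinarith [hα.1, hα.2]
  set I' : Set (ℝ × ℝ) := {p : ℝ × ℝ | p.1 ≤ p.2 ∧ α ≤ g p} with hI'
  have hI'm : MeasurableSet I' :=
    (measurableSet_le measurable_fst measurable_snd).inter
      (measurableSet_le measurable_const hgm)
  -- trace of Iα F
  have hkey : ∀ p : ℝ × ℝ, {y : ℝ | (p.1 : EReal) ≤ (y : EReal) ∧ (y : EReal) ≤ (p.2 : EReal)}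
      = Icc p.1 p.2 := by
    intro p; ext y; simp [EReal.coe_le_coe_iff]
  have htrace : {p : ℝ × ℝ | p.1 ≤ p.2 ∧ ((p.1 : EReal), (p.2 : EReal)) ∈ Iα F} = I' := by
    ext p
    rw [hIα]
    simp only [mem_setOf_eq, EReal.coe_le_coe_iff, hkey p, hI', hg]
    tauto
  have hmemI : ∀ p : ℝ × ℝ,
      (p.1 ≤ p.2 ∧ ((p.1 : EReal), (p.2 : EReal)) ∈ Iα F) ↔ p ∈ I' := by
    intro p
    rw [← htrace]; rfl
  -- LHS value
  have hLHS : ∫ y, S (Iα F) y ∂F = ∫ p in I', w p ∂μ := by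
    have heq : (fun y => S (Iα F) y) = fun y =>
        α * (μ I').toReal - (μ (I' ∩ {p : ℝ × ℝ | p.1 ≤ y ∧ y ≤ p.2})).toReal := by
      have hset2 : ∀ y : ℝ, {p : ℝ × ℝ | p.1 ≤ p.2 ∧ ((p.1 : EReal), (p.2 : EReal)) ∈ Iα F ∧
          p.1 ≤ y ∧ y ≤ p.2} = I' ∩ {p : ℝ × ℝ | p.1 ≤ y ∧ y ≤ p.2} := by
        intro y
        ext p
        simp only [mem_setOf_eq, mem_inter_iff, ← hmemI p]
        tauto
      funext y
      rw [hS, htrace, hset2 y]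
    rw [heq, core_id α μ F I' hI'm]
  -- measurable hull of the trace of A
  set Au : Set (ℝ × ℝ) := {p : ℝ × ℝ | p.1 ≤ p.2 ∧ ((p.1 : EReal), (p.2 : EReal)) ∈ A}
    with hAu
  set B : Set (ℝ × ℝ) := toMeasurable μ Au ∩ {p : ℝ × ℝ | p.1 ≤ p.2} with hB
  have hBm : MeasurableSet B :=
    (measurableSet_toMeasurable μ Au).inter (measurableSet_le measurable_fst measurable_snd)
  have hsub : Au ⊆ B := fun p hp => ⟨subset_toMeasurable μ Au hp, hp.1⟩
  have hμeq : μ B = μ Au :=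
    le_antisymm ((measure_mono inter_subset_left).trans (measure_toMeasurable Au).le)
      (measure_mono hsub)
  -- pointwise bound
  have hpt : ∀ y, α * (μ B).toReal - (μ (B ∩ {p : ℝ × ℝ | p.1 ≤ y ∧ y ≤ p.2})).toReal
      ≤ S A y := by
    intro y
    rw [hS]
    have hset : {p : ℝ × ℝ | p.1 ≤ p.2 ∧ ((p.1 : EReal), (p.2 : EReal)) ∈ A ∧
        p.1 ≤ y ∧ y ≤ p.2} = Au ∩ {p : ℝ × ℝ | p.1 ≤ y ∧ y ≤ p.2} := by
      ext p; simp only [mem_setOf_eq, mem_inter_iff, hAu]; tauto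
    rw [hset, hμeq]
    have hmono : (μ (Au ∩ {p : ℝ × ℝ | p.1 ≤ y ∧ y ≤ p.2})).toReal
        ≤ (μ (B ∩ {p : ℝ × ℝ | p.1 ≤ y ∧ y ≤ p.2})).toReal :=
      ENNReal.toReal_mono (measure_ne_top μ _)
        (measure_mono (inter_subset_inter_left _ hsub))
    linarith
  -- integrability of the minorant
  have hTint : Integrable (fun y =>
      α * (μ B).toReal - (μ (B ∩ {p : ℝ × ℝ | p.1 ≤ y ∧ y ≤ p.2})).toReal) F := by
    refine (integrable_const (α * (μ B).toReal)).sub ?_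
    refine (integrable_const ((μ univ).toReal)).mono'
      ((meas_slice μ B hBm).ennreal_toReal).aestronglyMeasurable ?_
    refine Filter.Eventually.of_forall fun y => ?_
    rw [Real.norm_eq_abs, abs_of_nonneg ENNReal.toReal_nonneg]
    exact ENNReal.toReal_mono (measure_ne_top μ _) (measure_mono (subset_univ _))
  -- middle inequality : ∫_{I'} w ≤ ∫_B w
  have hmid : ∫ p in I', w p ∂μ ≤ ∫ p in B, w p ∂μ := by
    have h1 : ∫ p in I' ∩ B, w p ∂μ + ∫ p in I' \ B, w p ∂μ = ∫ p in I', w p ∂μ :=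
      integral_inter_add_diff hBm hwint.integrableOn
    have h2 : ∫ p in B ∩ I', w p ∂μ + ∫ p in B \ I', w p ∂μ = ∫ p in B, w p ∂μ :=
      integral_inter_add_diff hI'm hwint.integrableOn
    have h3 : ∫ p in I' \ B, w p ∂μ ≤ 0 := by
      refine setIntegral_nonpos (hI'm.diff hBm) fun p hp => ?_
      have := hp.1.2
      simp only [hw]; linarith
    have h4 : 0 ≤ ∫ p in B \ I', w p ∂μ := by
      refine setIntegral_nonneg (hBm.diff hI'm) fun p hp => ?_
      have hle : p.1 ≤ p.2 := hp.1.2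
      have : ¬ (p.1 ≤ p.2 ∧ α ≤ g p) := hp.2
      have : g p < α := by
        by_contra hc
        push_neg at hc
        exact this ⟨hle, hc⟩
      simp only [hw]; linarith
    have h5 : I' ∩ B = B ∩ I' := inter_comm _ _
    rw [h5] at h1
    linarith
  have hTval : ∫ y, (α * (μ B).toReal
      - (μ (B ∩ {p : ℝ × ℝ | p.1 ≤ y ∧ y ≤ p.2})).toReal) ∂F = ∫ p in B, w p ∂μ :=
    core_id α μ F B hBm
  by_cases hint : Integrable (fun y => S A y) F
  · calc ∫ y, S (Iα F) y ∂F = ∫ p in I', w p ∂μ := hLHS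
      _ ≤ ∫ p in B, w p ∂μ := hmid
      _ = ∫ y, (α * (μ B).toReal
          - (μ (B ∩ {p : ℝ × ℝ | p.1 ≤ y ∧ y ≤ p.2})).toReal) ∂F := hTval.symm
      _ ≤ ∫ y, S A y ∂F := integral_mono hTint hint hpt
  · rw [integral_undef hint, hLHS]
    refine setIntegral_nonpos hI'm fun p hp => ?_
    have := hp.2
    simp only [hw]; linarith
end

section
/- For α ∈ (0,1) with 1/α = n an integer, the functional I_α mapping a distribution to its set of α-prediction intervals is not injective on the class of distributions with strictly increasing continuous CDFs having singleton α- and (1−α)-quantiles: the distributions F_a on [0,1] with densities f_a(y) = 1 − a·cos(2πny) for a ∈ [0,1] all satisfy I_α(F_a) = I_α(F_0) (where F_0 is uniform on [0,1]). -/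
open MeasureTheory Set

private lemma my_sin_lip (x y : ℝ) (h : x ≤ y) : Real.sin y - Real.sin x ≤ y - x := by
  have hsub : Real.sin y - Real.sin x
      = 2 * Real.sin ((y - x) / 2) * Real.cos ((y + x) / 2) := Real.sin_sub_sin _ _
  set t : ℝ := (y - x) / 2 with htdef
  set m : ℝ := Real.cos ((y + x) / 2) with hmdef
  have ht0 : 0 ≤ t := by rw [htdef]; linarith
  have hm1 : -1 ≤ m := Real.neg_one_le_cos _
  have hm2 : m ≤ 1 := Real.cos_le_one _
  have hst : Real.sin t ≤ t := by
    rcases eq_or_lt_of_le ht0 with h0 | h0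
    · simp [← h0]
    · exact (Real.sin_lt h0).le
  have hyx : y - x = 2 * t := by rw [htdef]; ring
  rw [hsub, hyx]
  rcases le_or_gt (Real.sin t) 0 with hs | hs
  · rcases eq_or_lt_of_le ht0 with h0 | h0
    · simp [← h0]
    · have htpi : Real.pi ≤ t := by
        by_contra hcon
        push_neg at hcon
        exact absurd (Real.sin_pos_of_pos_of_lt_pi h0 hcon) (not_lt.mpr hs)
      have h1 : -Real.sin t ≤ 1 := by
        have := Real.neg_one_le_sin t; linarith
      have hpi : (1 : ℝ) ≤ Real.pi := by linarith [Real.pi_gt_three]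
      nlinarith
  · nlinarith

private lemma key_nonneg (a u v k : ℝ) (ha0 : 0 ≤ a) (ha1 : a ≤ 1) (huv : u ≤ v)
    (hk : 0 < k) :
    0 ≤ (v - u) - a / k * (Real.sin (k * v) - Real.sin (k * u)) := by
  have hd : Real.sin (k * v) - Real.sin (k * u) ≤ k * v - k * u :=
    my_sin_lip _ _ (by nlinarith)
  have hak0 : 0 ≤ a / k := div_nonneg ha0 hk.le
  rcases le_or_gt (Real.sin (k * v) - Real.sin (k * u)) 0 with h | h
  · nlinarith
  · have h1 : a / k * (Real.sin (k * v) - Real.sin (k * u)) ≤ a / k * (k * v - k * u) :=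
      mul_le_mul_of_nonneg_left hd hak0
    have h2 : a / k * (k * v - k * u) = a * (v - u) := by field_simp
    nlinarith

private lemma key_lt (a u v : ℝ) (n : ℕ) (hn : 1 ≤ n) (ha0 : 0 ≤ a) (ha1 : a ≤ 1)
    (huv : u ≤ v) (h : v - u < 1 / n) :
    (v - u) - a / (2 * Real.pi * n) *
      (Real.sin (2 * Real.pi * n * v) - Real.sin (2 * Real.pi * n * u)) < 1 / n := by
  have hn1 : (1 : ℝ) ≤ n := by exact_mod_cast hn
  have hn0 : (0 : ℝ) < n := by linarith
  set k : ℝ := 2 * Real.pi * n with hkdef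
  have hk : 0 < k := by positivity
  set t : ℝ := k * (v - u) / 2 with htdef
  have ht0 : 0 ≤ t := by
    rw [htdef]
    apply div_nonneg _ (by norm_num)
    exact mul_nonneg hk.le (by linarith)
  have htπ : t < Real.pi := by
    have h1 : k * (v - u) < k * (1 / n) := by
      rcases eq_or_lt_of_le huv with rfl | hlt
      · simp; positivity
      · exact mul_lt_mul_of_pos_left h hk
    have hkn : k * (1 / n) = 2 * Real.pi := by field_simp [hkdef]; rw [hkdef]; ring
    rw [hkn] at h1
    rw [htdef]
    linarith
  have hsub : Real.sin (k * v) - Real.sin (k * u)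
      = 2 * Real.sin ((k * v - k * u) / 2) * Real.cos ((k * v + k * u) / 2) :=
    Real.sin_sub_sin _ _
  have harg : (k * v - k * u) / 2 = t := by rw [htdef]; ring
  set m : ℝ := Real.cos ((k * v + k * u) / 2) with hmdef
  rw [hsub, harg]
  have hs0 : 0 ≤ Real.sin t := Real.sin_nonneg_of_nonneg_of_le_pi ht0 htπ.le
  have hs1 : Real.sin t < Real.pi - t := by
    have := Real.sin_lt (x := Real.pi - t) (by linarith)
    rwa [Real.sin_pi_sub] at this
  have hm1 : -1 ≤ m := Real.neg_one_le_cos _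
  have hm2 : m ≤ 1 := Real.cos_le_one _
  rw [← mul_lt_mul_iff_right₀ hk]
  have e1 : k * ((v - u) - a / k * (2 * Real.sin t * m))
      = 2 * t - a * (2 * Real.sin t * m) := by
    field_simp [htdef]; ring
  have e2 : k * (1 / n) = 2 * Real.pi := by field_simp [hkdef]; rw [hkdef]; ring
  rw [e1, e2]
  have h5 : 0 ≤ 1 + a * m := by nlinarith
  have hbound : 0 ≤ Real.sin t * (1 + a * m) := mul_nonneg hs0 h5
  nlinarith

private lemma key_ge (a u v : ℝ) (n : ℕ) (hn : 1 ≤ n) (ha0 : 0 ≤ a) (ha1 : a ≤ 1)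
    (h : u + 1 / n ≤ v) :
    1 / (n : ℝ) ≤ (v - u) - a / (2 * Real.pi * n) *
      (Real.sin (2 * Real.pi * n * v) - Real.sin (2 * Real.pi * n * u)) := by
  have hn1 : (1 : ℝ) ≤ n := by exact_mod_cast hn
  have hn0 : (0 : ℝ) < n := by linarith
  set k : ℝ := 2 * Real.pi * n with hkdef
  have hk : 0 < k := by positivity
  have hper : Real.sin (k * (u + 1 / n)) = Real.sin (k * u) := by
    have harg : k * (u + 1 / n) = k * u + 2 * Real.pi := by
      rw [hkdef]; field_simp
    rw [harg, Real.sin_add_two_pi]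
  have h2 := key_nonneg a (u + 1 / n) v k ha0 ha1 h hk
  rw [hper] at h2
  linarith

private lemma int_eval (n : ℕ) (a c1 c2 : ℝ) (hn : 1 ≤ n) (h : c1 ≤ c2) :
    ∫ y in Icc c1 c2, (1 - a * Real.cos (2 * Real.pi * n * y))
      = (c2 - c1) - a / (2 * Real.pi * n) *
        (Real.sin (2 * Real.pi * n * c2) - Real.sin (2 * Real.pi * n * c1)) := by
  have hn1 : (1 : ℝ) ≤ n := by exact_mod_cast hn
  set k : ℝ := 2 * Real.pi * n with hkdef
  have hk : 0 < k := by positivity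
  have hcont : Continuous fun y : ℝ => 1 - a * Real.cos (k * y) := by continuity
  have hderiv : ∀ y ∈ Set.uIcc c1 c2,
      HasDerivAt (fun y : ℝ => y - a / k * Real.sin (k * y))
        (1 - a * Real.cos (k * y)) y := by
    intro y _
    have h1 : HasDerivAt (fun y : ℝ => k * y) k y := by
      simpa using (hasDerivAt_id y).const_mul k
    have h2 : HasDerivAt (fun y : ℝ => Real.sin (k * y)) (Real.cos (k * y) * k) y :=
      (Real.hasDerivAt_sin (k * y)).comp y h1
    have h3 := (hasDerivAt_id y).sub (h2.const_mul (a / k))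
    convert h3 using 1
    · rfl
    · rfl
    · rfl
    · rw [mul_comm (Real.cos _) k, ← mul_assoc, div_mul_cancel₀ a hk.ne']
  have key := intervalIntegral.integral_eq_sub_of_hasDerivAt hderiv
    (hcont.intervalIntegrable c1 c2)
  rw [MeasureTheory.integral_Icc_eq_integral_Ioc,
    ← intervalIntegral.integral_of_le h, key]
  ring

private lemma meas_eq (n : ℕ) (a p1 p2 : ℝ) (ha0 : 0 ≤ a) (ha1 : a ≤ 1) :
    ((MeasureTheory.volume.withDensity (fun y : ℝ => ENNReal.ofReal
        (if y ∈ Icc (0 : ℝ) 1 then 1 - a * Real.cos (2 * Real.pi * n * y) else 0)))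
      (Icc p1 p2)).toReal
    = ∫ y in Icc (max p1 0) (min p2 1), (1 - a * Real.cos (2 * Real.pi * n * y)) := by
  set f : ℝ → ℝ := fun y => 1 - a * Real.cos (2 * Real.pi * n * y) with hfdef
  have hfcont : Continuous f := by continuity
  have hgeq : (fun y : ℝ => if y ∈ Icc (0 : ℝ) 1 then f y else 0)
      = (Icc (0 : ℝ) 1).indicator f := by
    ext y; simp [Set.indicator_apply]
  have hint : Integrable ((Icc (0 : ℝ) 1).indicator f) volume :=
    (hfcont.integrableOn_Icc).integrable_indicator measurableSet_Icc
  have hpos : ∀ y, 0 ≤ (Icc (0 : ℝ) 1).indicator f y := by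
    intro y
    apply Set.indicator_nonneg
    intro x _
    have h1 := Real.cos_le_one (2 * Real.pi * n * x)
    have h2 := Real.neg_one_le_cos (2 * Real.pi * n * x)
    simp only [hfdef]
    nlinarith
  have hif : ∀ y : ℝ, (if y ∈ Icc (0 : ℝ) 1 then 1 - a * Real.cos (2 * Real.pi * n * y) else 0)
      = (Icc (0 : ℝ) 1).indicator f y := by
    intro y; rw [Set.indicator_apply]
  rw [withDensity_apply _ measurableSet_Icc]
  simp only [hif]
  rw [← MeasureTheory.ofReal_integral_eq_lintegral_ofReal hint.restrict
      (Filter.Eventually.of_forall hpos)]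
  rw [ENNReal.toReal_ofReal (MeasureTheory.integral_nonneg hpos)]
  rw [MeasureTheory.setIntegral_indicator measurableSet_Icc, Set.Icc_inter_Icc]

private lemma cond_iff (n : ℕ) (hn : 1 ≤ n) (a p1 p2 : ℝ) (ha0 : 0 ≤ a) (ha1 : a ≤ 1) :
    1 / (n : ℝ) ≤ ((MeasureTheory.volume.withDensity (fun y : ℝ => ENNReal.ofReal
        (if y ∈ Icc (0 : ℝ) 1 then 1 - a * Real.cos (2 * Real.pi * n * y) else 0)))
      (Icc p1 p2)).toReal
    ↔ max p1 0 + 1 / n ≤ min p2 1 := by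
  have hn1 : (1 : ℝ) ≤ n := by exact_mod_cast hn
  have hn0 : (0 : ℝ) < n := by linarith
  rw [meas_eq n a p1 p2 ha0 ha1]
  set c1 : ℝ := max p1 0
  set c2 : ℝ := min p2 1
  rcases le_or_gt c1 c2 with hc | hc
  · rw [int_eval n a c1 c2 hn hc]
    constructor
    · intro h
      by_contra hcon
      push_neg at hcon
      have hlen : c2 - c1 < 1 / n := by linarith
      have := key_lt a c1 c2 n hn ha0 ha1 hc hlen
      linarith
    · intro h
      exact key_ge a c1 c2 n hn ha0 ha1 h
  · rw [Set.Icc_eq_empty (not_le.mpr hc)]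
    simp only [Measure.restrict_empty, integral_zero_measure]
    constructor
    · intro h
      exfalso
      have : 0 < 1 / (n : ℝ) := by positivity
      linarith
    · intro h
      exfalso
      have hpos' : 0 < 1 / (n : ℝ) := by positivity
      linarith

/-- Non-injectivity of I_α for α = 1/n: all densities f_a(y) = 1 − a cos(2πny) on [0,1]
yield the same class of α-prediction intervals. -/
theorem stmt_11 (n : ℕ) (hn : 2 ≤ n) (α : ℝ) (hα : α = 1 / n)
    (Fd : ℝ → Measure ℝ)
    (hFd : ∀ a : ℝ, Fd a = MeasureTheory.volume.withDensity
      (fun y : ℝ => ENNReal.ofReal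
        (if y ∈ Icc (0 : ℝ) 1 then 1 - a * Real.cos (2 * Real.pi * n * y) else 0)))
    (Iα : Measure ℝ → Set (ℝ × ℝ))
    (hIα : ∀ F : Measure ℝ, Iα F =
      {p : ℝ × ℝ | p.1 ≤ p.2 ∧ α ≤ (F (Icc p.1 p.2)).toReal}) :
    ∀ a ∈ Icc (0 : ℝ) 1, Iα (Fd a) = Iα (Fd 0) := by
  intro a ha
  obtain ⟨ha0, ha1⟩ := ha
  have hn1 : 1 ≤ n := by omega
  rw [hIα, hIα, hFd a, hFd 0]
  ext p
  simp only [mem_setOf_eq, hα]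
  constructor
  · rintro ⟨h12, hm⟩
    exact ⟨h12, (cond_iff n hn1 0 p.1 p.2 le_rfl zero_le_one).mpr
      ((cond_iff n hn1 a p.1 p.2 ha0 ha1).mp hm)⟩
  · rintro ⟨h12, hm⟩
    exact ⟨h12, (cond_iff n hn1 a p.1 p.2 ha0 ha1).mpr
      ((cond_iff n hn1 0 p.1 p.2 le_rfl zero_le_one).mp hm)⟩
end

section
/- Let α ∈ (0,1), α = k/n with k,n ∈ N, k < n, and for 0 ≤ b < 1/(2πn) define the CDF F_b(y) = y + b·sin(2πny) on [0,1]. Then for all y ∈ [0, 1−α], F_b(y+α) − F_b(y) = α, and for all y ∈ (1−α, 1], (F_b(1) − F_b(y)) + (F_b(y+α−1) − F_b(0)) = α; consequently all F_b share the same set of 'wrapped' α-prediction intervals, so the wrapped-interval functional is not injective for rational α. -/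
open Set

lemma sin_shift (n : ℕ) (hn : 0 < n) (m : ℤ) (y : ℝ) :
    Real.sin (2 * Real.pi * n * (y + m / n)) = Real.sin (2 * Real.pi * n * y) := by
  have hn' : (n : ℝ) ≠ 0 := Nat.cast_ne_zero.mpr hn.ne'
  have : 2 * Real.pi * n * (y + m / n) = 2 * Real.pi * n * y + m * (2 * Real.pi) := by
    field_simp
  rw [this, Real.sin_add_int_mul_two_pi]

lemma g_strictMono (n : ℕ) (hn : 0 < n) (b : ℝ) (hb0 : 0 ≤ b)
    (hb1 : b < 1 / (2 * Real.pi * n)) :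
    StrictMono (fun y : ℝ => y + b * Real.sin (2 * Real.pi * n * y)) := by
  have hc : (0 : ℝ) < 2 * Real.pi * n := by
    have := Real.pi_pos
    have : (0 : ℝ) < (n : ℝ) := Nat.cast_pos.mpr hn
    positivity
  have hbc : b * (2 * Real.pi * n) < 1 := by
    rw [lt_div_iff₀ hc] at hb1; linarith
  have hder : ∀ y : ℝ, HasDerivAt (fun y : ℝ => y + b * Real.sin (2 * Real.pi * n * y))
      (1 + b * (Real.cos (2 * Real.pi * n * y) * (2 * Real.pi * n))) y := by
    intro y
    have h1 : HasDerivAt (fun y : ℝ => 2 * Real.pi * n * y) (2 * Real.pi * n) y := by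
      simpa using (hasDerivAt_id y).const_mul (2 * Real.pi * n)
    have h2 := (Real.hasDerivAt_sin (2 * Real.pi * n * y)).comp y h1
    exact (hasDerivAt_id y).add (h2.const_mul b)
  apply strictMono_of_deriv_pos
  intro y
  rw [(hder y).deriv]
  have hcos : -1 ≤ Real.cos (2 * Real.pi * n * y) := Real.neg_one_le_cos _
  nlinarith [mul_le_mul_of_nonneg_right (mul_le_mul_of_nonneg_left hcos hb0) hc.le,
    mul_nonneg hb0 hc.le]

/-- Perturbed CDFs F_b(y) = y + b sin(2πny) all share the same wrapped α-prediction
intervals for rational α = k/n. -/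
theorem stmt_12 (k n : ℕ) (hk : 1 ≤ k) (hkn : k < n) (α : ℝ) (hα : α = (k : ℝ) / n)
    (Fb : ℝ → ℝ → ℝ)
    (hFb : ∀ b y : ℝ, Fb b y = y + b * Real.sin (2 * Real.pi * n * y)) :
    ∀ b ∈ Ico (0 : ℝ) (1 / (2 * Real.pi * n)),
      (∀ y ∈ Icc (0 : ℝ) (1 - α), Fb b (y + α) - Fb b y = α) ∧
      (∀ y ∈ Ioc (1 - α) 1, (Fb b 1 - Fb b y) + (Fb b (y + α - 1) - Fb b 0) = α) ∧
      (∀ b' ∈ Ico (0 : ℝ) (1 / (2 * Real.pi * n)),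
        {p : ℝ × ℝ | p.1 ∈ Icc (0 : ℝ) 1 ∧ p.2 ∈ Icc (0 : ℝ) 1 ∧
          ((p.1 ≤ p.2 ∧ α ≤ Fb b p.2 - Fb b p.1) ∨
           (p.2 ≤ p.1 ∧ α ≤ Fb b p.2 + (1 - Fb b p.1)))} =
        {p : ℝ × ℝ | p.1 ∈ Icc (0 : ℝ) 1 ∧ p.2 ∈ Icc (0 : ℝ) 1 ∧
          ((p.1 ≤ p.2 ∧ α ≤ Fb b' p.2 - Fb b' p.1) ∨
           (p.2 ≤ p.1 ∧ α ≤ Fb b' p.2 + (1 - Fb b' p.1)))}) := by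
  have hn : 0 < n := lt_of_le_of_lt (Nat.zero_le k) hkn
  have hn' : (n : ℝ) ≠ 0 := Nat.cast_ne_zero.mpr hn.ne'
  -- shift lemma: Fb b (y + m/n) = Fb b y + m/n
  have hshift : ∀ (b : ℝ) (m : ℤ) (y : ℝ), Fb b (y + m / n) = Fb b y + m / n := by
    intro b m y
    rw [hFb, hFb, sin_shift n hn m y]; ring
  have hα' : ∀ (b y : ℝ), Fb b (y + α) = Fb b y + α := by
    intro b y
    have := hshift b k y
    rw [hα]; push_cast at this ⊢; exact this
  have hα'' : ∀ (b y : ℝ), Fb b (y + α - 1) = Fb b y + α - 1 := by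
    intro b y
    have h := hshift b ((k : ℤ) - n) y
    have e : ((k : ℤ) - n : ℝ) / n = α - 1 := by
      rw [hα]; push_cast; field_simp
    push_cast at h
    rw [hα]
    have e2 : y + (k : ℝ) / n - 1 = y + ((k : ℝ) - n) / n := by field_simp; ring
    rw [e2, h]
    field_simp
    ring
  have hsub : ∀ (c x : ℝ), Fb c (x - 1) = Fb c x - 1 := by
    intro c x
    have h := hshift c (-(n : ℤ)) x
    push_cast at h
    have hneg : -(n : ℝ) / n = -1 := by rw [neg_div, div_self hn']
    rw [hneg] at h
    rw [show x - 1 = x + -1 by ring, h]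
    ring
  -- key equivalence
  have hkey : ∀ b ∈ Ico (0 : ℝ) (1 / (2 * Real.pi * n)), ∀ x y : ℝ,
      (α ≤ Fb b y - Fb b x ↔ α ≤ y - x) := by
    intro b hb x y
    have hmono := g_strictMono n hn b hb.1 hb.2
    have hsh := hα' b x
    rw [hFb b (x + α), hFb b x] at hsh
    constructor
    · intro h
      rw [hFb b y, hFb b x] at h
      by_contra hlt
      push_neg at hlt
      have hyx : y < x + α := by linarith
      have := hmono hyx
      simp only at this
      linarith
    · intro h
      have hxy : x + α ≤ y := by linarith
      have := hmono.le_iff_le.mpr hxy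
      rw [hFb b y, hFb b x]
      linarith
  intro b hb
  refine ⟨fun y _ => by rw [hα' b y]; ring, fun y _ => ?_, fun b' hb' => ?_⟩
  · have h1 : Fb b 1 = 1 := by
      rw [hFb]
      have : 2 * Real.pi * n * 1 = (n : ℤ) * (2 * Real.pi) := by push_cast; ring
      rw [this]
      rw [show ((n : ℤ) : ℝ) * (2 * Real.pi) = 0 + (n : ℤ) * (2 * Real.pi) by ring,
        Real.sin_add_int_mul_two_pi, Real.sin_zero]
      ring
    have h0 : Fb b 0 = 0 := by rw [hFb]; simp
    rw [h1, h0, hα'' b y]; ring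
  · ext p
    simp only [mem_setOf_eq]
    constructor
    · rintro ⟨h1, h2, h3 | h3⟩
      · exact ⟨h1, h2, Or.inl ⟨h3.1, (hkey b' hb' p.1 p.2).mpr ((hkey b hb p.1 p.2).mp h3.2)⟩⟩
      · refine ⟨h1, h2, Or.inr ⟨h3.1, ?_⟩⟩
        have e : ∀ c : ℝ, Fb c p.2 + (1 - Fb c p.1) = Fb c p.2 - (Fb c p.1 - 1) := by
          intro c; ring
        have h3' : α ≤ Fb b p.2 - Fb b (p.1 - 1) := by rw [hsub b p.1]; linarith [h3.2]
        have := (hkey b' hb' (p.1 - 1) p.2).mpr ((hkey b hb (p.1 - 1) p.2).mp h3')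
        rw [hsub b' p.1] at this
        linarith
    · rintro ⟨h1, h2, h3 | h3⟩
      · exact ⟨h1, h2, Or.inl ⟨h3.1, (hkey b hb p.1 p.2).mpr ((hkey b' hb' p.1 p.2).mp h3.2)⟩⟩
      · refine ⟨h1, h2, Or.inr ⟨h3.1, ?_⟩⟩
        have h3' : α ≤ Fb b' p.2 - Fb b' (p.1 - 1) := by rw [hsub b' p.1]; linarith [h3.2]
        have := (hkey b hb (p.1 - 1) p.2).mpr ((hkey b' hb' (p.1 - 1) p.2).mp h3')
        rw [hsub b p.1] at this
        linarith
end

section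
/- For α ∈ [1/2, 1) and the uniform distribution Unif([b,c]) on [b,c] (b < c), the function Γ_α(Unif([b,c]))(a) equals max(a,b) + α(c−b) for all a ≤ c − α(c−b). Consequently, for any b < 0 and any c with 1 − b(1−α)/α ≤ c ≤ 1 − bα/(1−α), one has ∅ ≠ I_α(Unif([b,c])) ⊊ I_α(Unif([0,1])). -/
open MeasureTheory Set

/-- Explicit value of the (normalized) uniform measure of an interval. -/
lemma unif_meas_toReal (b c x y : ℝ) (hbc : b < c) :
    ((((ENNReal.ofReal (c - b))⁻¹ • MeasureTheory.volume.restrict (Icc b c)) (Icc x y)).toReal)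
      = max (min y c - max x b) 0 / (c - b) := by
  rw [Measure.smul_apply, Measure.restrict_apply measurableSet_Icc, Icc_inter_Icc,
    Real.volume_Icc, smul_eq_mul, ENNReal.toReal_mul, ENNReal.toReal_inv,
    ENNReal.toReal_ofReal (by linarith : (0:ℝ) ≤ c - b), ENNReal.toReal_ofReal',
    inv_mul_eq_div]

lemma unif_cond_iff (α b c x y : ℝ) (hbc : b < c) (hα0 : 0 < α) :
    α ≤ max (min y c - max x b) 0 / (c - b) ↔ max x b + α * (c - b) ≤ min y c := by
  rw [le_div_iff₀ (by linarith : (0:ℝ) < c - b)]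
  constructor
  · intro h
    rcases le_max_iff.mp h with h' | h'
    · linarith
    · nlinarith
  · intro h
    exact le_max_iff.mpr (Or.inl (by linarith))

/-- For uniform distributions and α ∈ [1/2,1): the explicit formula for Γ_α, and the
resulting proper-subset relation between classes of α-prediction intervals. -/
theorem stmt_13 (α : ℝ) (hα : α ∈ Ico (1 / 2 : ℝ) 1)
    (Unif : ℝ → ℝ → Measure ℝ)
    (hU : ∀ b c : ℝ, Unif b c =
      (ENNReal.ofReal (c - b))⁻¹ • MeasureTheory.volume.restrict (Icc b c))
    (Γ : Measure ℝ → ℝ → ℝ)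
    (hΓ : ∀ (F : Measure ℝ) (a : ℝ),
      Γ F a = sInf {t : ℝ | a ≤ t ∧ α ≤ (F (Icc a t)).toReal})
    (Iα : Measure ℝ → Set (ℝ × ℝ))
    (hIα : ∀ F : Measure ℝ, Iα F =
      {p : ℝ × ℝ | p.1 ≤ p.2 ∧ α ≤ (F (Icc p.1 p.2)).toReal}) :
    (∀ b c : ℝ, b < c → ∀ a : ℝ, a ≤ c - α * (c - b) →
      Γ (Unif b c) a = max a b + α * (c - b)) ∧
    (∀ b c : ℝ, b < 0 → 1 - b * (1 - α) / α ≤ c → c ≤ 1 - b * α / (1 - α) →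
      (Iα (Unif b c)).Nonempty ∧ Iα (Unif b c) ⊂ Iα (Unif 0 1)) := by
  obtain ⟨hα2, hα1⟩ := hα
  have hα0 : 0 < α := lt_of_lt_of_le (by norm_num) hα2
  constructor
  · intro b c hbc a ha
    rw [hΓ, hU]
    have hMc : max a b + α * (c - b) ≤ c := by
      have h1 : a + α * (c - b) ≤ c := by linarith
      have h2 : b + α * (c - b) ≤ c := by nlinarith
      rcases max_cases a b with ⟨h, _⟩ | ⟨h, _⟩ <;> rw [h] <;> linarith
    have hkey : {t : ℝ | a ≤ t ∧ α ≤
        ((((ENNReal.ofReal (c - b))⁻¹ • MeasureTheory.volume.restrict (Icc b c))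
          (Icc a t)).toReal)} = Ici (max a b + α * (c - b)) := by
      ext t
      simp only [mem_setOf_eq, mem_Ici]
      rw [unif_meas_toReal b c a t hbc, unif_cond_iff α b c a t hbc hα0]
      constructor
      · rintro ⟨_, h⟩
        exact le_trans h (min_le_left _ _)
      · intro h
        have haM : a < max a b + α * (c - b) := by
          have := le_max_left a b
          nlinarith
        refine ⟨by linarith, le_min h hMc⟩
    rw [hkey, csInf_Ici]
  · intro b c hb h1 h2
    have h1α : (0:ℝ) < 1 - α := by linarith
    -- derived inequalities
    have F1 : (1 - c) * α ≤ b * (1 - α) :=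
      (le_div_iff₀ hα0).mp (by linarith : (1:ℝ) - c ≤ b * (1 - α) / α)
    have F2 : b * α ≤ (1 - c) * (1 - α) :=
      (div_le_iff₀ h1α).mp (by linarith : b * α / (1 - α) ≤ 1 - c)
    have hc1 : 1 < c := by nlinarith
    have hbc : b < c := by linarith
    have hcb1 : 1 < c - b := by nlinarith
    -- F1' : α ≤ α*c + (1-α)*b
    have F1' : α ≤ b + α * (c - b) := by nlinarith
    -- F2' : c - α*(c-b) ≤ 1 - α
    have F2' : c - α * (c - b) ≤ 1 - α := by nlinarith
    constructor
    · refine ⟨(b, c), ?_⟩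
      rw [hIα, hU]
      refine ⟨le_of_lt hbc, ?_⟩
      rw [unif_meas_toReal b c b c hbc, unif_cond_iff α b c b c hbc hα0]
      simp only [max_self, min_self]
      nlinarith
    · rw [hIα, hIα, hU, hU, ssubset_def]
      constructor
      · rintro ⟨x, y⟩ ⟨hxy, hm⟩
        refine ⟨hxy, ?_⟩
        rw [unif_meas_toReal b c x y hbc] at hm
        rw [unif_cond_iff α b c x y hbc hα0] at hm
        rw [unif_meas_toReal 0 1 x y one_pos, unif_cond_iff α 0 1 x y one_pos hα0]
        have hyc : min y c ≤ y := min_le_left _ _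
        have hycc : min y c ≤ c := min_le_right _ _
        have hxb : x ≤ max x b := le_max_left x b
        have hbb : b ≤ max x b := le_max_right x b
        -- x ≤ 1 - α
        have hx1 : x ≤ 1 - α := by nlinarith
        have hmax1 : max x 0 ≤ 1 - α := max_le hx1 (by linarith)
        -- y ≥ max x 0 + α
        have hy1 : x + α ≤ y := by nlinarith
        have hy2 : α ≤ y := by nlinarith
        have hy : max x 0 + α ≤ y := by
          rcases max_cases x 0 with ⟨h, _⟩ | ⟨h, _⟩ <;> rw [h] <;> linarith
        have : max x 0 + α * (1 - 0) ≤ min y 1 := by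
          rw [mul_sub, mul_zero, mul_one, sub_zero]
          exact le_min hy (by linarith)
        exact this
      · intro hcon
        have hmem : ((1 - α, 1) : ℝ × ℝ) ∈ {p : ℝ × ℝ | p.1 ≤ p.2 ∧ α ≤
            ((((ENNReal.ofReal ((1:ℝ) - 0))⁻¹ •
              MeasureTheory.volume.restrict (Icc (0:ℝ) 1)) (Icc p.1 p.2)).toReal)} := by
          refine ⟨show (1-α:ℝ) ≤ 1 by linarith, ?_⟩
          rw [unif_meas_toReal 0 1 (1 - α) 1 one_pos,
            unif_cond_iff α 0 1 (1 - α) 1 one_pos hα0]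
          rw [max_eq_left (by linarith : (0:ℝ) ≤ 1 - α), min_self]
          linarith
        have := hcon hmem
        obtain ⟨_, hm⟩ := this
        rw [unif_meas_toReal b c (1 - α) 1 hbc,
          unif_cond_iff α b c (1 - α) 1 hbc hα0] at hm
        rw [max_eq_left (by linarith : b ≤ 1 - α),
          min_eq_left (by linarith : (1:ℝ) ≤ c)] at hm
        nlinarith
end

section
/- Let g: R → R be strictly increasing and bounded, extended by limits to ±∞. The scoring function S((a,b), y) = ∞·1{y ∉ [a,b]} + g(b) − g(a) is strictly consistent for the shortest 1-prediction interval SI_1(F) = (essinf(F), esssup(F)) on all Borel probability distributions on R: E_F[S((a,b),Y)] is minimized uniquely at (a,b) = (essinf(F), esssup(F)) (with the convention ∞·0 = 0). -/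
open MeasureTheory Set

lemma stmt14_null_lower (F : Measure ℝ) :
    F {y : ℝ | (y : EReal) < sSup {t : EReal | F {y : ℝ | (y : EReal) < t} = 0}} = 0 := by
  set S : Set EReal := {t : EReal | F {y : ℝ | (y : EReal) < t} = 0} with hS
  apply measure_mono_null
    (t := ⋃ q ∈ {q : ℚ | F (Set.Iic (q : ℝ)) = 0}, Set.Iic (q : ℝ))
  · intro y hy
    obtain ⟨t, htS, hyt⟩ := lt_sSup_iff.mp (show (y:EReal) < sSup S from hy)
    obtain ⟨q, hq1, hq2⟩ := EReal.exists_rat_btwn_of_lt hyt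
    refine Set.mem_biUnion (x := q) ?_ ?_
    · show F (Set.Iic (q : ℝ)) = 0
      apply measure_mono_null _ htS
      intro z hz
      exact lt_of_le_of_lt (EReal.coe_le_coe_iff.mpr hz) hq2
    · exact le_of_lt (by exact_mod_cast hq1)
  · rw [measure_biUnion_null_iff (Set.to_countable _)]
    exact fun q hq => hq

lemma stmt14_null_upper (F : Measure ℝ) :
    F {y : ℝ | sInf {t : EReal | F {y : ℝ | t < (y : EReal)} = 0} < (y : EReal)} = 0 := by
  set S : Set EReal := {t : EReal | F {y : ℝ | t < (y : EReal)} = 0} with hS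
  apply measure_mono_null
    (t := ⋃ q ∈ {q : ℚ | F (Set.Ici (q : ℝ)) = 0}, Set.Ici (q : ℝ))
  · intro y hy
    obtain ⟨t, htS, hyt⟩ := sInf_lt_iff.mp (show sInf S < (y:EReal) from hy)
    obtain ⟨q, hq1, hq2⟩ := EReal.exists_rat_btwn_of_lt hyt
    refine Set.mem_biUnion (x := q) ?_ ?_
    · show F (Set.Ici (q : ℝ)) = 0
      apply measure_mono_null _ htS
      intro z hz
      exact lt_of_lt_of_le hq1 (EReal.coe_le_coe_iff.mpr hz)
    · exact le_of_lt (by exact_mod_cast hq2)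
  · rw [measure_biUnion_null_iff (Set.to_countable _)]
    exact fun q hq => hq

/-- The score S((a,b),y) = ∞·1{y ∉ [a,b]} + g(b) − g(a), with g strictly increasing
(extended to ±∞), has expected value uniquely minimized at (essinf F, esssup F). -/
theorem stmt_14 (g : EReal → ℝ) (hg : StrictMono g)
    (F : Measure ℝ) [IsProbabilityMeasure F]
    (einf esup : EReal)
    (hinf : einf = sSup {t : EReal | F {y : ℝ | (y : EReal) < t} = 0})
    (hsup : esup = sInf {t : EReal | F {y : ℝ | t < (y : EReal)} = 0})
    (ES : EReal × EReal → EReal)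
    (hES : ∀ p : EReal × EReal, ES p =
      if F {y : ℝ | p.1 ≤ (y : EReal) ∧ (y : EReal) ≤ p.2} = 1
      then ((g p.2 - g p.1 : ℝ) : EReal) else ⊤) :
    ∀ p : EReal × EReal, p.1 ≤ p.2 →
      ES (einf, esup) ≤ ES p ∧ (ES (einf, esup) = ES p → p = (einf, esup)) := by
  have hmeas : ∀ a b : EReal,
      MeasurableSet {y : ℝ | a ≤ (y : EReal) ∧ (y : EReal) ≤ b} := by
    intro a b
    have : {y : ℝ | a ≤ (y : EReal) ∧ (y : EReal) ≤ b}
        = (fun y : ℝ => (y : EReal)) ⁻¹' Set.Icc a b := rfl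
    rw [this]
    exact measurable_coe_real_ereal measurableSet_Icc
  -- the optimal interval has probability one
  have hone : F {y : ℝ | einf ≤ (y : EReal) ∧ (y : EReal) ≤ esup} = 1 := by
    rw [← prob_compl_eq_zero_iff (hmeas einf esup)]
    apply measure_mono_null (t := {y : ℝ | (y : EReal) < einf}
        ∪ {y : ℝ | esup < (y : EReal)})
    · intro y hy
      simp only [Set.mem_compl_iff, Set.mem_setOf_eq, not_and_or, not_le] at hy
      exact hy.imp (fun h => h) (fun h => h)
    · apply measure_union_null
      · rw [hinf]; exact stmt14_null_lower F
      · rw [hsup]; exact stmt14_null_upper F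
  intro p hp
  rw [hES, hES]
  simp only [hone, if_true]
  by_cases hPp : F {y : ℝ | p.1 ≤ (y : EReal) ∧ (y : EReal) ≤ p.2} = 1
  · -- p contains the support, so p.1 ≤ einf and esup ≤ p.2
    have hcompl : F ({y : ℝ | p.1 ≤ (y : EReal) ∧ (y : EReal) ≤ p.2})ᶜ = 0 :=
      (prob_compl_eq_zero_iff (hmeas p.1 p.2)).mpr hPp
    have h1 : p.1 ≤ einf := by
      rw [hinf]
      apply le_sSup
      apply measure_mono_null _ hcompl
      intro y hy
      simp only [Set.mem_compl_iff, Set.mem_setOf_eq, not_and_or, not_le]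
      exact Or.inl hy
    have h2 : esup ≤ p.2 := by
      rw [hsup]
      apply sInf_le
      apply measure_mono_null _ hcompl
      intro y hy
      simp only [Set.mem_compl_iff, Set.mem_setOf_eq, not_and_or, not_le]
      exact Or.inr hy
    have hg1 : g p.1 ≤ g einf := hg.monotone h1
    have hg2 : g esup ≤ g p.2 := hg.monotone h2
    simp only [hPp, if_true]
    constructor
    · exact EReal.coe_le_coe_iff.mpr (by linarith)
    · intro heq
      have heq' : g esup - g einf = g p.2 - g p.1 := EReal.coe_eq_coe_iff.mp heq
      have e1 : g p.1 = g einf := by linarith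
      have e2 : g esup = g p.2 := by linarith
      have hp1 : p.1 = einf := hg.injective e1
      have hp2 : esup = p.2 := hg.injective e2
      exact Prod.ext hp1 hp2.symm
  · simp only [hPp, if_false]
    exact ⟨le_top, fun h => absurd h (EReal.coe_ne_top _)⟩
end

section
/- For α ∈ (0,1], the shortest α-prediction interval SI_α is not exhaustively elicitable with a finite-expectation score on any class M containing {(1−λ)δ_x + λδ_y : λ ∈ [0,1]} for some x ≠ y: specifically, for F_λ = (1−λ)δ_0 + λδ_1, the map λ ↦ SI_α(F_λ) is non-constant, attains only finitely many values, and hence admits no strictly M-consistent M-finite exhaustive scoring function. -/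
open MeasureTheory Set
open scoped ENNReal

noncomputable def mymix (x y t : ℝ) : Measure ℝ :=
  (1 - ENNReal.ofReal t) • Measure.dirac x + ENNReal.ofReal t • Measure.dirac y

lemma mymix_mass (x y t a b : ℝ) (ht0 : 0 ≤ t) (ht1 : t ≤ 1) :
    ((mymix x y t) (Icc a b)).toReal =
      (if x ∈ Icc a b then 1 - t else 0) + (if y ∈ Icc a b then t else 0) := by
  have h2 : (ENNReal.ofReal t).toReal = t := ENNReal.toReal_ofReal ht0
  have hle : ENNReal.ofReal t ≤ 1 := by
    simpa using ENNReal.ofReal_le_ofReal ht1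
  have h1 : (1 - ENNReal.ofReal t).toReal = 1 - t := by
    rw [ENNReal.toReal_sub_of_le hle ENNReal.one_ne_top, h2, ENNReal.toReal_one]
  have hfin1 : (1 - ENNReal.ofReal t) ≠ ⊤ := by finiteness
  have hfin2 : (ENNReal.ofReal t) ≠ ⊤ := ENNReal.ofReal_ne_top
  simp only [mymix, Measure.add_apply, Measure.smul_apply, smul_eq_mul,
    Measure.dirac_apply, Set.indicator_apply, Pi.one_apply]
  split_ifs <;>
    simp [ENNReal.toReal_add, hfin1, hfin2, h1, h2]

section chars
variable {α x y t : ℝ}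

lemma SI_single (hα : 0 < α) (hxy : x < y) (ht0 : 0 ≤ t) (ht1 : t ≤ 1)
    (h1 : α ≤ 1 - t) (h2 : t < α) :
    {p : ℝ × ℝ | p.1 ≤ p.2 ∧ α ≤ ((mymix x y t) (Icc p.1 p.2)).toReal ∧
      ∀ q : ℝ × ℝ, q.1 ≤ q.2 → α ≤ ((mymix x y t) (Icc q.1 q.2)).toReal →
        p.2 - p.1 ≤ q.2 - q.1} = {(x, x)} := by
  have mxx : ((mymix x y t) (Icc x x)).toReal = 1 - t := by
    rw [mymix_mass x y t x x ht0 ht1,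
      if_pos (by simp : x ∈ Icc x x),
      if_neg (fun h => absurd h.2 (not_le.2 hxy)), add_zero]
  ext ⟨a, b⟩
  simp only [mem_setOf_eq, mem_singleton_iff, Prod.mk.injEq]
  constructor
  · rintro ⟨hab, hmass, hmin⟩
    have hxx := hmin (x, x) le_rfl (by rw [mxx]; exact h1)
    have hba : a = b := le_antisymm hab (by linarith)
    subst hba
    rw [mymix_mass x y t a a ht0 ht1] at hmass
    split_ifs at hmass with h3 h4 h4
    · exact absurd hxy (not_lt.2 (h4.2.trans h3.1))
    · exact ⟨(le_antisymm h3.1 h3.2).symm ▸ rfl, (le_antisymm h3.1 h3.2).symm ▸ rfl⟩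
    · linarith
    · linarith
  · rintro ⟨ha, hb⟩; subst ha; subst hb
    exact ⟨le_rfl, by rw [mxx]; exact h1, fun q hq _ => by linarith⟩

lemma SI_pair (hα : 0 < α) (hxy : x < y) (ht0 : 0 ≤ t) (ht1 : t ≤ 1)
    (h1 : α ≤ 1 - t) (h2 : α ≤ t) :
    {p : ℝ × ℝ | p.1 ≤ p.2 ∧ α ≤ ((mymix x y t) (Icc p.1 p.2)).toReal ∧
      ∀ q : ℝ × ℝ, q.1 ≤ q.2 → α ≤ ((mymix x y t) (Icc q.1 q.2)).toReal →
        p.2 - p.1 ≤ q.2 - q.1} = {(x, x), (y, y)} := by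
  have mxx : ((mymix x y t) (Icc x x)).toReal = 1 - t := by
    rw [mymix_mass x y t x x ht0 ht1,
      if_pos (by simp : x ∈ Icc x x),
      if_neg (fun h => absurd h.2 (not_le.2 hxy)), add_zero]
  have myy : ((mymix x y t) (Icc y y)).toReal = t := by
    rw [mymix_mass x y t y y ht0 ht1,
      if_neg (fun h => absurd h.1 (not_le.2 hxy)),
      if_pos (by simp : y ∈ Icc y y), zero_add]
  ext ⟨a, b⟩
  simp only [mem_setOf_eq, mem_insert_iff, mem_singleton_iff, Prod.mk.injEq]
  constructor
  · rintro ⟨hab, hmass, hmin⟩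
    have hxx := hmin (x, x) le_rfl (by rw [mxx]; exact h1)
    have hba : a = b := le_antisymm hab (by linarith)
    subst hba
    rw [mymix_mass x y t a a ht0 ht1] at hmass
    split_ifs at hmass with h3 h4 h4
    · exact absurd hxy (not_lt.2 (h4.2.trans h3.1))
    · exact Or.inl ⟨(le_antisymm h3.1 h3.2).symm ▸ rfl, (le_antisymm h3.1 h3.2).symm ▸ rfl⟩
    · exact Or.inr ⟨(le_antisymm h4.1 h4.2).symm ▸ rfl, (le_antisymm h4.1 h4.2).symm ▸ rfl⟩
    · linarith
  · rintro (⟨ha, hb⟩ | ⟨ha, hb⟩) <;> subst ha <;> subst hb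
    · exact ⟨le_rfl, by rw [mxx]; exact h1, fun q hq _ => by linarith⟩
    · exact ⟨le_rfl, by rw [myy]; exact h2, fun q hq _ => by linarith⟩

lemma SI_span (hα : 0 < α) (hα1 : α ≤ 1) (hxy : x < y) (ht0 : 0 ≤ t) (ht1 : t ≤ 1)
    (h1 : 1 - t < α) (h2 : t < α) :
    {p : ℝ × ℝ | p.1 ≤ p.2 ∧ α ≤ ((mymix x y t) (Icc p.1 p.2)).toReal ∧
      ∀ q : ℝ × ℝ, q.1 ≤ q.2 → α ≤ ((mymix x y t) (Icc q.1 q.2)).toReal →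
        p.2 - p.1 ≤ q.2 - q.1} = {(x, y)} := by
  have mxy : ((mymix x y t) (Icc x y)).toReal = 1 := by
    rw [mymix_mass x y t x y ht0 ht1,
      if_pos (Set.left_mem_Icc.2 hxy.le), if_pos (Set.right_mem_Icc.2 hxy.le)]
    ring
  -- any qualifying interval contains both x and y
  have hboth : ∀ q : ℝ × ℝ, α ≤ ((mymix x y t) (Icc q.1 q.2)).toReal →
      q.1 ≤ x ∧ y ≤ q.2 := by
    intro q hq
    rw [mymix_mass x y t q.1 q.2 ht0 ht1] at hq
    split_ifs at hq with h3 h4 h4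
    · exact ⟨h3.1, h4.2⟩
    · linarith
    · linarith
    · linarith
  ext ⟨a, b⟩
  simp only [mem_setOf_eq, mem_singleton_iff, Prod.mk.injEq]
  constructor
  · rintro ⟨hab, hmass, hmin⟩
    have hb := hboth (a, b) hmass
    have hxyq := hmin (x, y) hxy.le (by rw [mxy]; linarith)
    constructor <;> linarith [hb.1, hb.2]
  · rintro ⟨ha, hb⟩; subst ha; subst hb
    refine ⟨hxy.le, by rw [mxy]; linarith, fun q hq hmq => ?_⟩
    have hb := hboth q hmq
    linarith [hb.1, hb.2]

end chars

lemma key (α : ℝ) (hα : α ∈ Ioc (0 : ℝ) 1)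
    (SIα : Measure ℝ → Set (ℝ × ℝ))
    (hSI : ∀ F : Measure ℝ, SIα F =
      {p : ℝ × ℝ | p.1 ≤ p.2 ∧ α ≤ (F (Icc p.1 p.2)).toReal ∧
        ∀ q : ℝ × ℝ, q.1 ≤ q.2 → α ≤ (F (Icc q.1 q.2)).toReal →
          p.2 - p.1 ≤ q.2 - q.1})
    (x y : ℝ) (hxy : x < y)
    (M : Set (Measure ℝ))
    (hM : ∀ l ∈ Icc (0 : ℝ≥0∞) 1,
      (1 - l) • Measure.dirac x + l • Measure.dirac y ∈ M) :
    ¬ ∃ S : Set (ℝ × ℝ) → ℝ → ℝ,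
      (∀ B : Set (ℝ × ℝ), ∀ F ∈ M, Integrable (S B) F) ∧
      (∀ F ∈ M, ∀ B : Set (ℝ × ℝ), ∫ z, S (SIα F) z ∂F ≤ ∫ z, S B z ∂F) ∧
      (∀ F ∈ M, ∀ B : Set (ℝ × ℝ),
        ∫ z, S (SIα F) z ∂F = ∫ z, S B z ∂F → B = SIα F) := by
  obtain ⟨hα0, hα1⟩ := hα
  rintro ⟨S, hint, hcons, hstrict⟩
  have hmem : ∀ t : ℝ, 0 ≤ t → t ≤ 1 → mymix x y t ∈ M := by
    intro t h0 h1
    exact hM (ENNReal.ofReal t) ⟨zero_le, by simpa using ENNReal.ofReal_le_ofReal h1⟩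
  have hx0 : Measure.dirac x ∈ M := by
    have := hmem 0 le_rfl zero_le_one
    simpa [mymix] using this
  have hy1 : Measure.dirac y ∈ M := by
    have := hmem 1 zero_le_one le_rfl
    simpa [mymix] using this
  have hInt : ∀ (B : Set (ℝ × ℝ)) (t : ℝ), 0 ≤ t → t ≤ 1 →
      ∫ z, S B z ∂(mymix x y t) = (1 - t) * S B x + t * S B y := by
    intro B t ht0 ht1
    have hIx : Integrable (S B) (Measure.dirac x) := hint B _ hx0
    have hIy : Integrable (S B) (Measure.dirac y) := hint B _ hy1
    have h2 : (ENNReal.ofReal t).toReal = t := ENNReal.toReal_ofReal ht0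
    have hle : ENNReal.ofReal t ≤ 1 := by simpa using ENNReal.ofReal_le_ofReal ht1
    have h1 : (1 - ENNReal.ofReal t).toReal = 1 - t := by
      rw [ENNReal.toReal_sub_of_le hle ENNReal.one_ne_top, h2, ENNReal.toReal_one]
    rw [show mymix x y t =
        (1 - ENNReal.ofReal t) • Measure.dirac x + ENNReal.ofReal t • Measure.dirac y from rfl,
      integral_add_measure (hIx.smul_measure (by finiteness))
        (hIy.smul_measure ENNReal.ofReal_ne_top),
      integral_smul_measure, integral_smul_measure, integral_dirac, integral_dirac,
      h1, h2, smul_eq_mul, smul_eq_mul]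
  have hlt : ∀ F ∈ M, ∀ B : Set (ℝ × ℝ), SIα F ≠ B →
      ∫ z, S (SIα F) z ∂F < ∫ z, S B z ∂F := by
    intro F hF B hne
    exact lt_of_le_of_ne (hcons F hF B) (fun h => hne (hstrict F hF B h).symm)
  have main : ∀ (A0 A1 : Set (ℝ × ℝ)) (t0 t1 : ℝ), 0 ≤ t0 → t1 ≤ 1 → t0 ≤ t1 →
      A0 ≠ A1 → SIα (mymix x y t0) = A0 → SIα (mymix x y t1) = A1 →
      (∀ t ∈ Ioo t0 t1, SIα (mymix x y t) = A0 ∨ SIα (mymix x y t) = A1) → False := by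
    intro A0 A1 t0 t1 h00 h11 h01 hne hS0 hS1 hmid
    have h0' : t0 ≤ 1 := h01.trans h11
    have h1' : 0 ≤ t1 := h00.trans h01
    set g : ℝ → ℝ := fun t =>
      ((1 - t) * S A0 x + t * S A0 y) - ((1 - t) * S A1 x + t * S A1 y) with hg
    have hgc : Continuous g := by fun_prop
    have hgt0 : g t0 < 0 := by
      have := hlt (mymix x y t0) (hmem t0 h00 h0') A1 (by rw [hS0]; exact hne)
      rw [hS0, hInt A0 t0 h00 h0', hInt A1 t0 h00 h0'] at this
      simp only [hg]
      linarith
    have hgt1 : 0 < g t1 := by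
      have := hlt (mymix x y t1) (hmem t1 h1' h11) A0 (by rw [hS1]; exact fun h => hne h.symm)
      rw [hS1, hInt A1 t1 h1' h11, hInt A0 t1 h1' h11] at this
      simp only [hg]
      linarith
    have h0mem : (0 : ℝ) ∈ Ioo (g t0) (g t1) := ⟨hgt0, hgt1⟩
    obtain ⟨ts, hts, hgts⟩ := intermediate_value_Ioo h01 hgc.continuousOn h0mem
    have hts0 : 0 ≤ ts := h00.trans hts.1.le
    have hts1 : ts ≤ 1 := hts.2.le.trans h11
    have heq : ∫ z, S A0 z ∂(mymix x y ts) = ∫ z, S A1 z ∂(mymix x y ts) := by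
      rw [hInt A0 ts hts0 hts1, hInt A1 ts hts0 hts1]
      have : g ts = 0 := hgts
      simp only [hg] at this
      linarith
    rcases hmid ts hts with h | h
    · exact hne (hstrict (mymix x y ts) (hmem ts hts0 hts1) A1 (by rw [h, heq]) ▸ h ▸ rfl)
    · exact hne ((hstrict (mymix x y ts) (hmem ts hts0 hts1) A0 (by rw [h, ← heq])).symm ▸
        h ▸ rfl)
  by_cases hhalf : α ≤ 1 / 2
  · -- β case: t0 = 0, t1 = α
    have hne : ({(x, x)} : Set (ℝ × ℝ)) ≠ {(x, x), (y, y)} := by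
      intro h
      have : ((y, y) : ℝ × ℝ) ∈ ({(x, x)} : Set (ℝ × ℝ)) := by
        rw [h]; exact Or.inr rfl
      rw [mem_singleton_iff, Prod.mk.injEq] at this
      exact hxy.ne' this.1
    refine main {(x, x)} {(x, x), (y, y)} 0 α le_rfl hα1 hα0.le hne ?_ ?_ ?_
    · rw [hSI]
      exact SI_single hα0 hxy le_rfl zero_le_one (by linarith) hα0
    · rw [hSI]
      exact SI_pair hα0 hxy hα0.le hα1 (by linarith) le_rfl
    · intro t ht
      left
      rw [hSI]
      exact SI_single hα0 hxy ht.1.le (by linarith [ht.2]) (by linarith [ht.2]) ht.2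
  · -- γ case: t0 = 1 - α, t1 = 1/2
    push_neg at hhalf
    have hne : ({(x, x)} : Set (ℝ × ℝ)) ≠ {(x, y)} := by
      intro h
      have : ((x, y) : ℝ × ℝ) ∈ ({(x, x)} : Set (ℝ × ℝ)) := by rw [h]; rfl
      rw [mem_singleton_iff, Prod.mk.injEq] at this
      exact hxy.ne' this.2
    refine main {(x, x)} {(x, y)} (1 - α) (1 / 2) (by linarith) (by linarith)
      (by linarith) hne ?_ ?_ ?_
    · rw [hSI]
      exact SI_single hα0 hxy (by linarith) (by linarith) (by linarith) (by linarith)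
    · rw [hSI]
      exact SI_span hα0 hα1 hxy (by linarith) (by linarith) (by linarith) hhalf
    · intro t ht
      right
      rw [hSI]
      exact SI_span hα0 hα1 hxy (by linarith [ht.1]) (by linarith [ht.2])
        (by linarith [ht.1]) (by linarith [ht.2])

/-- The shortest α-prediction interval is not exhaustively elicitable with an M-finite
score on any class containing a segment of mixtures of two Dirac measures. -/
theorem stmt_16 (α : ℝ) (hα : α ∈ Ioc (0 : ℝ) 1)
    (SIα : Measure ℝ → Set (ℝ × ℝ))
    (hSI : ∀ F : Measure ℝ, SIα F =
      {p : ℝ × ℝ | p.1 ≤ p.2 ∧ α ≤ (F (Icc p.1 p.2)).toReal ∧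
        ∀ q : ℝ × ℝ, q.1 ≤ q.2 → α ≤ (F (Icc q.1 q.2)).toReal →
          p.2 - p.1 ≤ q.2 - q.1})
    (x y : ℝ) (hxy : x ≠ y)
    (M : Set (Measure ℝ))
    (hprob : ∀ F ∈ M, IsProbabilityMeasure F)
    (hM : ∀ l ∈ Icc (0 : ℝ≥0∞) 1,
      (1 - l) • Measure.dirac x + l • Measure.dirac y ∈ M) :
    ¬ ∃ S : Set (ℝ × ℝ) → ℝ → ℝ,
      (∀ B : Set (ℝ × ℝ), ∀ F ∈ M, Integrable (S B) F) ∧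
      (∀ F ∈ M, ∀ B : Set (ℝ × ℝ), ∫ z, S (SIα F) z ∂F ≤ ∫ z, S B z ∂F) ∧
      (∀ F ∈ M, ∀ B : Set (ℝ × ℝ),
        ∫ z, S (SIα F) z ∂F = ∫ z, S B z ∂F → B = SIα F) := by
  rcases hxy.lt_or_gt with h | h
  · exact key α hα SIα hSI x y h M hM
  · refine key α hα SIα hSI y x h M ?_
    intro l hl
    have h2 := hM (1 - l) ⟨zero_le, tsub_le_self⟩
    rwa [ENNReal.sub_sub_cancel ENNReal.one_ne_top hl.2, add_comm] at h2
end

section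
/- Let μ be a σ-finite nonnegative measure on E and α ∈ [0,1]. For any random closed set Y with E[μ(Y)] < ∞ and μ(Q_α(Y)) < ∞, and any closed set X with μ(X) < ∞: E[α·μ(X) − μ(Y∩X)] ≥ E[α·μ(Q_α(Y)) − μ(Y∩Q_α(Y))], with equality if and only if there exists a measurable set D with Q_α^>(Y) ⊆ D ⊆ Q_α(Y) and μ(X △ D) = 0. -/
open MeasureTheory Set

/-- Consistency of the score S̃_α(X,Y) = α μ(X) − μ(Y∩X) for the Vorob'ev quantile,
with exact characterisation of the minimisers. -/
theorem stmt_18 {E : Type*} [NormedAddCommGroup E] [NormedSpace ℝ E]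
    [TopologicalSpace.SeparableSpace E] [MeasurableSpace E] [BorelSpace E]
    {Ω : Type*} [MeasurableSpace Ω] (P : Measure Ω) [IsProbabilityMeasure P]
    (μ : Measure E) [SigmaFinite μ]
    (α : ℝ) (hα : α ∈ Icc (0 : ℝ) 1)
    (Y : Ω → Set E) (hclosed : ∀ ω, IsClosed (Y ω))
    (hgraph : MeasurableSet {q : Ω × E | q.2 ∈ Y q.1})
    (p : E → ℝ) (hp : ∀ u : E, p u = (P {ω | u ∈ Y ω}).toReal)
    (hYint : (∫⁻ ω, μ (Y ω) ∂P) < ⊤)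
    (hQ : μ {u : E | α ≤ p u} < ⊤)
    (ES : Set E → ℝ)
    (hES : ∀ X : Set E, ES X = α * (μ X).toReal - (∫⁻ ω, μ (Y ω ∩ X) ∂P).toReal) :
    ∀ X : Set E, IsClosed X → μ X < ⊤ →
      ES {u : E | α ≤ p u} ≤ ES X ∧
      (ES X = ES {u : E | α ≤ p u} ↔
        ∃ D : Set E, MeasurableSet D ∧ {u : E | α < p u} ⊆ D ∧ D ⊆ {u : E | α ≤ p u} ∧
          μ ((X \ D) ∪ (D \ X)) = 0) := by
  intro X hXcl hXfin
  set g : E → ENNReal := fun u => P {ω | u ∈ Y ω} with hgdef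
  have hpg : p = fun u => (g u).toReal := funext hp
  have hgmeas : Measurable g := by
    have h := measurable_measure_prodMk_right (μ := P) hgraph
    convert h using 2 with u
    rfl
  have hgne : ∀ u, g u ≠ ⊤ := fun u => (measure_lt_top P _).ne
  have hpmeas : Measurable p := by rw [hpg]; exact hgmeas.ennreal_toReal
  set Q : Set E := {u : E | α ≤ p u} with hQdef
  set Qs : Set E := {u : E | α < p u} with hQsdef
  have hQmeas : MeasurableSet Q := measurableSet_le measurable_const hpmeas
  have hQsmeas : MeasurableSet Qs := measurableSet_lt measurable_const hpmeas
  have hXmeas : MeasurableSet X := hXcl.measurableSet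
  have memQ : ∀ {u : E}, u ∈ Q ↔ α ≤ p u := fun {u} => Iff.rfl
  have memQs : ∀ {u : E}, u ∈ Qs ↔ α < p u := fun {u} => Iff.rfl
  -- Robbins' theorem
  have robbins : ∀ A : Set E, MeasurableSet A →
      (∫⁻ ω, μ (Y ω ∩ A) ∂P) = ∫⁻ u in A, g u ∂μ := by
    intro A hA
    set s : Set (Ω × E) := {q : Ω × E | q.2 ∈ Y q.1} ∩ (univ ×ˢ A) with hsdef
    have hs : MeasurableSet s := hgraph.inter (MeasurableSet.univ.prod hA)
    calc ∫⁻ ω, μ (Y ω ∩ A) ∂P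
        = ∫⁻ ω, μ (Prod.mk ω ⁻¹' s) ∂P := by
          congr 1; ext ω; congr 1; ext u
          simp [hsdef, Set.mem_prod]
      _ = (P.prod μ) s := (Measure.prod_apply hs).symm
      _ = ∫⁻ u, P ((fun ω => (ω, u)) ⁻¹' s) ∂μ := Measure.prod_apply_symm hs
      _ = ∫⁻ u, A.indicator g u ∂μ := by
          congr 1; ext u
          by_cases hu : u ∈ A
          · simp only [indicator_of_mem hu]
            congr 1; ext ω; simp [hsdef, hu]
          · simp only [indicator_of_notMem hu]
            convert measure_empty (μ := P)
            ext ω; simp [hsdef, hu]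
      _ = ∫⁻ u in A, g u ∂μ := lintegral_indicator hA g
  -- integrability of p
  have hgint : (∫⁻ u, g u ∂μ) ≠ ⊤ := by
    have := robbins univ MeasurableSet.univ
    simp only [Set.inter_univ, Measure.restrict_univ] at this
    rw [← this]; exact hYint.ne
  have hpInt : Integrable p μ := by
    rw [hpg]
    exact integrable_toReal_of_lintegral_ne_top hgmeas.aemeasurable hgint
  -- ES in terms of the coverage function
  have hES' : ∀ A : Set E, MeasurableSet A → μ A < ⊤ →
      ES A = α * (μ A).toReal - ∫ u in A, p u ∂μ := by
    intro A hA hAfin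
    rw [hES A, robbins A hA]
    congr 1
    rw [hpg]
    exact (integral_toReal (hgmeas.aemeasurable.restrict)
      (ae_of_all _ fun u => lt_of_le_of_ne le_top (hgne u))).symm
  set f : E → ℝ := fun u => p u - α with hfdef
  have hfInt : ∀ A : Set E, μ A < ⊤ → IntegrableOn f A μ := by
    intro A hAfin
    exact hpInt.integrableOn.sub (integrableOn_const hAfin.ne)
  have hESf : ∀ A : Set E, MeasurableSet A → μ A < ⊤ →
      ES A = -∫ u in A, f u ∂μ := by
    intro A hA hAfin
    rw [hES' A hA hAfin, integral_sub hpInt.integrableOn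
      (integrableOn_const hAfin.ne)]
    simp only [integral_const, Measure.real, Measure.restrict_apply_univ, smul_eq_mul]
    ring
  -- decomposition
  have hQX : μ (Q \ X) < ⊤ := (measure_mono Set.diff_subset).trans_lt hQ
  have hXQ : μ (X \ Q) < ⊤ := (measure_mono Set.diff_subset).trans_lt hXfin
  have decomp : ∀ A B : Set E, MeasurableSet A → MeasurableSet B → μ A < ⊤ →
      ∫ u in A, f u ∂μ = (∫ u in A ∩ B, f u ∂μ) + ∫ u in A \ B, f u ∂μ := by
    intro A B hA hB hAfin
    have hdisj : Disjoint (A ∩ B) (A \ B) :=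
      disjoint_sdiff_right.mono_left Set.inter_subset_right
    have h := setIntegral_union (f := f) (μ := μ) hdisj (hA.diff hB)
      (hfInt _ ((measure_mono Set.inter_subset_left).trans_lt hAfin))
      (hfInt _ ((measure_mono Set.diff_subset).trans_lt hAfin))
    rw [Set.inter_union_diff] at h
    exact h
  set A' : ℝ := ∫ u in X \ Q, f u ∂μ with hA'def
  set B' : ℝ := ∫ u in Q \ X, f u ∂μ with hB'def
  have hdiff : (∫ u in Q, f u ∂μ) - (∫ u in X, f u ∂μ) = B' - A' := by
    rw [decomp Q X hQmeas hXmeas hQ, decomp X Q hXmeas hQmeas hXfin, Set.inter_comm]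
    ring
  have hA'nonpos : A' ≤ 0 := by
    have h0 : 0 ≤ ∫ u in X \ Q, -(f u) ∂μ := by
      apply setIntegral_nonneg (hXmeas.diff hQmeas)
      intro u hu
      have : p u < α := not_le.mp (fun h => hu.2 (memQ.mpr h))
      simp only [hfdef]
      linarith
    rw [integral_neg] at h0
    linarith
  have hB'nonneg : 0 ≤ B' := by
    apply setIntegral_nonneg (hQmeas.diff hXmeas)
    intro u hu
    have := memQ.mp hu.1
    simp only [hfdef]
    linarith
  have hA'zero : A' = 0 ↔ μ (X \ Q) = 0 := by
    constructor
    · intro h0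
      by_contra hne
      have hpos : 0 < μ (X \ Q) := pos_iff_ne_zero.mpr hne
      have h1 : 0 < ∫ u in X \ Q, -(f u) ∂μ := by
        rw [setIntegral_pos_iff_support_of_nonneg_ae]
        · refine hpos.trans_le (measure_mono ?_)
          intro u hu
          refine ⟨?_, hu⟩
          have hlt : p u < α := not_le.mp (fun h => hu.2 (memQ.mpr h))
          simp only [Function.mem_support, hfdef]
          intro hc
          have : p u - α = 0 := by linarith [neg_eq_zero.mp hc]
          linarith
        · refine ae_restrict_of_forall_mem (hXmeas.diff hQmeas) fun u hu => ?_
          have hlt : p u < α := not_le.mp (fun h => hu.2 (memQ.mpr h))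
          show (0:ℝ) ≤ -(f u)
          simp only [hfdef]
          linarith
        · exact ((hfInt _ hXQ).neg : IntegrableOn (fun u => -(f u)) _ μ)
      rw [integral_neg] at h1
      rw [hA'def] at h0
      linarith
    · intro h0
      rw [hA'def, Measure.restrict_eq_zero.mpr h0, integral_zero_measure]
  have hB'zero : B' = 0 ↔ μ (Qs \ X) = 0 := by
    have hae : B' = 0 ↔ f =ᵐ[μ.restrict (Q \ X)] 0 := by
      rw [hB'def]
      exact integral_eq_zero_iff_of_nonneg_ae
        (ae_restrict_of_forall_mem (hQmeas.diff hXmeas) fun u hu => by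
          have := memQ.mp hu.1
          simp only [Pi.zero_apply, hfdef]; linarith)
        (hfInt _ hQX)
    have hfmeas : Measurable f := hpmeas.sub measurable_const
    have hset : MeasurableSet {a : E | ¬ f a = 0} :=
      (hfmeas (measurableSet_singleton (0:ℝ))).compl
    rw [hae, Filter.EventuallyEq, ae_iff]
    simp only [Pi.zero_apply]
    rw [Measure.restrict_apply hset]
    have hseteq : {a : E | ¬ f a = 0} ∩ (Q \ X) = Qs \ X := by
      ext u
      constructor
      · rintro ⟨hne, hq, hx⟩
        have hle : α ≤ p u := memQ.mp hq
        have : p u - α ≠ 0 := by simpa [hfdef] using hne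
        exact ⟨memQs.mpr (lt_of_le_of_ne hle (fun h => this (by linarith))), hx⟩
      · rintro ⟨hs', hx⟩
        have hlt : α < p u := memQs.mp hs'
        refine ⟨?_, memQ.mpr hlt.le, hx⟩
        simp only [Set.mem_setOf_eq, hfdef]
        intro h; linarith
    rw [hseteq]
  -- main inequality
  have hESX : ES X = -∫ u in X, f u ∂μ := hESf X hXmeas hXfin
  have hESQ : ES Q = -∫ u in Q, f u ∂μ := hESf Q hQmeas hQ
  have hkey : ES X - ES Q = B' - A' := by rw [hESX, hESQ]; linarith [hdiff]
  constructor
  · linarith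
  · constructor
    · intro heq
      have h0 : B' - A' = 0 := by linarith [hkey, heq]
      have hA0 : A' = 0 := le_antisymm hA'nonpos (by linarith)
      have hB0 : B' = 0 := by linarith
      refine ⟨Qs ∪ (X ∩ Q), hQsmeas.union (hXmeas.inter hQmeas),
        Set.subset_union_left, ?_, ?_⟩
      · exact Set.union_subset (fun u hu => memQ.mpr (memQs.mp hu).le) Set.inter_subset_right
      · apply measure_union_null
        · refine measure_mono_null (fun u hu => ?_) (hA'zero.mp hA0)
          exact ⟨hu.1, fun hq => hu.2 (Or.inr ⟨hu.1, hq⟩)⟩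
        · refine measure_mono_null (fun u hu => ?_) (hB'zero.mp hB0)
          rcases hu.1 with h | h
          · exact ⟨h, hu.2⟩
          · exact absurd h.1 hu.2
    · rintro ⟨D, hDmeas, hQsD, hDQ, hnull⟩
      have hXQ0 : μ (X \ Q) = 0 := by
        refine measure_mono_null (fun u hu => ?_) hnull
        exact Or.inl ⟨hu.1, fun hD => hu.2 (hDQ hD)⟩
      have hQsX0 : μ (Qs \ X) = 0 := by
        refine measure_mono_null (fun u hu => ?_) hnull
        exact Or.inr ⟨hQsD hu.1, hu.2⟩
      have hA0 : A' = 0 := hA'zero.mpr hXQ0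
      have hB0 : B' = 0 := hB'zero.mpr hQsX0
      linarith [hkey]
end
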